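/- arXiv:1609.07083 — 8 statements merged into one kernel-verified Lean document; each statement's English description precedes it below -/
import Mathlib

section
/- A square matrix A of order k with non-negative entries fails to have support (i.e., every permutation σ ∈ S_k satisfies ∏_{i=1}^k a_{i,σ(i)} = 0) if and only if there exist nonempty index sets α, β ⊆ {1,…,k} with |α| + |β| > k such that the submatrix A[α|β] is identically zero. -/
open Matrix BigOperators

/-- Frobenius–König theorem: a square matrix with non-negative entries fails to have
support iff there is an identically zero submatrix `A[α|β]` with `|α| + |β| > k`. -/
theorem frobenius_konig {k : ℕ} (A : Matrix (Fin k) (Fin k) ℝ)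
    (hA : ∀ i j, 0 ≤ A i j) :
    (∀ σ : Equiv.Perm (Fin k), ∏ i, A i (σ i) = 0) ↔
      ∃ (α β : Finset (Fin k)), α.Nonempty ∧ β.Nonempty ∧ k < α.card + β.card ∧
        ∀ i ∈ α, ∀ j ∈ β, A i j = 0 := by
  classical
  set t : Fin k → Finset (Fin k) := fun i => {j | A i j ≠ 0} with ht
  constructor
  · intro h
    by_contra hcon
    push_neg at hcon
    -- If no zero block, Hall's condition holds
    have hall : ∀ s : Finset (Fin k), s.card ≤ (s.biUnion t).card := by
      intro s
      by_contra hs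
      push_neg at hs
      have hsne : s.Nonempty := by
        rw [Finset.nonempty_iff_ne_empty]
        rintro rfl
        simp at hs
      set β := (s.biUnion t)ᶜ with hβ
      have hβne : β.Nonempty := by
        rw [hβ, ← Finset.card_pos, Finset.card_compl]
        have h2 : (s.biUnion t).card < k :=
          lt_of_lt_of_le hs (le_trans (Finset.card_le_univ s) (by simp))
        simp only [Fintype.card_fin]
        omega
      have hcard : k < s.card + β.card := by
        rw [hβ, Finset.card_compl]
        have h1 : (s.biUnion t).card ≤ k := le_trans (Finset.card_le_univ _) (by simp)
        simp only [Fintype.card_fin]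
        omega
      obtain ⟨i, hi, j, hj, hij⟩ := hcon s β hsne hβne hcard
      apply hij
      by_contra hne
      have : j ∈ s.biUnion t := Finset.mem_biUnion.2 ⟨i, hi, by simp [ht, hne]⟩
      rw [hβ] at hj
      exact (Finset.mem_compl.1 hj) this
    obtain ⟨f, hfinj, hf⟩ := (Finset.all_card_le_biUnion_card_iff_exists_injective t).1 hall
    have hbij : Function.Bijective f :=
      (Fintype.bijective_iff_injective_and_card f).2 ⟨hfinj, rfl⟩
    set σ := Equiv.ofBijective f hbij
    have := h σ
    rw [Finset.prod_eq_zero_iff] at this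
    obtain ⟨i, _, hi⟩ := this
    have : f i ∈ t i := hf i
    simp [ht] at this
    exact this hi
  · rintro ⟨α, β, hαne, hβne, hcard, hblock⟩ σ
    -- There must exist i ∈ α with σ i ∈ β
    have : ∃ i ∈ α, σ i ∈ β := by
      by_contra hno
      push_neg at hno
      have hsub : α.image σ ⊆ βᶜ := by
        intro j hj
        obtain ⟨i, hi, rfl⟩ := Finset.mem_image.1 hj
        exact Finset.mem_compl.2 (hno i hi)
      have h1 : α.card ≤ βᶜ.card := by
        calc α.card = (α.image σ).card := (Finset.card_image_of_injective _ σ.injective).symm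
          _ ≤ βᶜ.card := Finset.card_le_card hsub
      rw [Finset.card_compl, Fintype.card_fin] at h1
      have h2 : β.card ≤ k := le_trans (Finset.card_le_univ _) (by simp)
      omega
    obtain ⟨i, hi, hσi⟩ := this
    exact Finset.prod_eq_zero (Finset.mem_univ i) (hblock i hi _ hσi)
end

section
/- A rectangular matrix A ∈ M_{k×m} does not have support if and only if there exists an identically zero submatrix A[α|β] such that |α|·m + |β|·k > k·m. -/
open Matrix BigOperators


theorem not_rectSupport_iff' {k m : ℕ} (A : Matrix (Fin k) (Fin m) ℝ)
    (hno : ¬ ∃ (α : Finset (Fin k)) (β : Finset (Fin m)), α.Nonempty ∧ β.Nonempty ∧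
        (∀ i ∈ α, ∀ j ∈ β, A i j = 0) ∧ k * m < α.card * m + β.card * k) :
    ∃ f : Fin k × Fin m → Fin m × Fin k, Function.Injective f ∧ ∀ p, A p.1 (f p).1 ≠ 0 := by
  classical
  push_neg at hno
  have key : ∀ I : Finset (Fin k),
      I.card * m ≤ (Finset.univ.filter fun j => ∃ i ∈ I, A i j ≠ 0).card * k := by
    intro I
    by_contra hlt
    push_neg at hlt
    set N := (Finset.univ.filter fun j => ∃ i ∈ I, A i j ≠ 0) with hN
    have h1 : 0 < I.card * m := lt_of_le_of_lt (Nat.zero_le _) hlt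
    have hIne : I.Nonempty :=
      Finset.card_pos.mp (Nat.pos_of_ne_zero (by intro h0; simp [h0] at h1))
    have hIk : I.card ≤ k := by simpa using I.card_le_univ
    have hβne : Nᶜ.Nonempty := by
      rcases Nᶜ.eq_empty_or_nonempty with h | h
      · exfalso
        have hNu : N = Finset.univ := by
          rwa [Finset.compl_eq_empty_iff] at h
        have hNcard : N.card = m := by simp [hNu]
        rw [hNcard] at hlt
        have h2 : I.card * m ≤ m * k := by
          rw [Nat.mul_comm m k]; exact Nat.mul_le_mul_right m hIk
        linarith
      · exact h
    have hz : ∀ i ∈ I, ∀ j ∈ Nᶜ, A i j = 0 := by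
      intro i hi j hj
      rw [Finset.mem_compl, hN, Finset.mem_filter] at hj
      push_neg at hj
      exact hj (Finset.mem_univ j) i hi
    have hc : N.card + Nᶜ.card = m := by
      rw [Finset.card_add_card_compl]; exact Fintype.card_fin m
    have hsum : N.card * k + Nᶜ.card * k = m * k := by rw [← Nat.add_mul, hc]
    have := hno I Nᶜ hIne hβne hz
    have hcm : k * m = m * k := Nat.mul_comm k m
    linarith
  set t : Fin k × Fin m → Finset (Fin m × Fin k) :=
    fun p => (Finset.univ.filter fun j => A p.1 j ≠ 0) ×ˢ Finset.univ with ht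
  have hall : ∀ S : Finset (Fin k × Fin m), S.card ≤ (S.biUnion t).card := by
    intro S
    set I := S.image Prod.fst with hI
    set N := (Finset.univ.filter fun j => ∃ i ∈ I, A i j ≠ 0) with hN
    have h1 : S.card ≤ I.card * m := by
      have hsub : S ⊆ I ×ˢ Finset.univ := by
        intro p hp
        rw [Finset.mem_product]
        exact ⟨Finset.mem_image_of_mem Prod.fst hp, Finset.mem_univ _⟩
      calc S.card ≤ (I ×ˢ (Finset.univ : Finset (Fin m))).card := Finset.card_le_card hsub
        _ = I.card * m := by simp [Finset.card_product]
    have h2 : N ×ˢ (Finset.univ : Finset (Fin k)) ⊆ S.biUnion t := by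
      rintro ⟨j, r⟩ hjr
      rw [Finset.mem_product, hN, Finset.mem_filter] at hjr
      obtain ⟨⟨-, i, hiI, hij⟩, -⟩ := hjr
      rw [hI, Finset.mem_image] at hiI
      obtain ⟨p, hpS, hpi⟩ := hiI
      rw [Finset.mem_biUnion]
      refine ⟨p, hpS, ?_⟩
      rw [ht]
      simp only [Finset.mem_product, Finset.mem_filter, Finset.mem_univ, true_and,
        and_true]
      rw [hpi]; exact hij
    calc S.card ≤ I.card * m := h1
      _ ≤ N.card * k := key I
      _ = (N ×ˢ (Finset.univ : Finset (Fin k))).card := by simp [Finset.card_product]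
      _ ≤ (S.biUnion t).card := Finset.card_le_card h2
  obtain ⟨f, hfinj, hf⟩ := (Finset.all_card_le_biUnion_card_iff_exists_injective t).mp hall
  refine ⟨f, hfinj, fun p => ?_⟩
  have := hf p
  rw [ht] at this
  simp only [Finset.mem_product, Finset.mem_filter, Finset.mem_univ, true_and, and_true] at this
  exact this


/-- A (possibly rectangular, as long as the index types have the same cardinality)
matrix has support if some generalized permutation diagonal has nonzero product. -/
def HasSupport {R C α : Type*} [Fintype R] [Fintype C] [CommMonoidWithZero α]
    (A : Matrix R C α) : Prop :=
  ∃ σ : R ≃ C, ∏ i, A i (σ i) ≠ 0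

/-- Total support: every nonzero entry lies on a nonzero generalized permutation diagonal. -/
def HasTotalSupport {R C α : Type*} [Fintype R] [Fintype C] [CommMonoidWithZero α]
    (A : Matrix R C α) : Prop :=
  ∀ p q, A p q ≠ 0 → ∃ σ : R ≃ C, σ p = q ∧ ∏ i, A i (σ i) ≠ 0

/-- The Kronecker product `A ⊗ 1_{m×k}` of `A ∈ M_{k×m}` with the all-ones matrix `1_{m×k}`. -/
def kronOnes {R C α : Type*} (A : Matrix R C α) : Matrix (R × C) (C × R) α :=
  Matrix.of fun p q => A p.1 q.1

/-- A rectangular matrix has support if `A ⊗ 1_{m×k}` has support. -/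
def RectSupport {R C α : Type*} [Fintype R] [Fintype C] [CommMonoidWithZero α]
    (A : Matrix R C α) : Prop :=
  HasSupport (kronOnes A)

/-- A rectangular matrix has total support if `A ⊗ 1_{m×k}` has total support. -/
def RectTotalSupport {R C α : Type*} [Fintype R] [Fintype C] [CommMonoidWithZero α]
    (A : Matrix R C α) : Prop :=
  HasTotalSupport (kronOnes A)

/-- A rectangular matrix `A ∈ M_{k×m}` does not have support iff there is an
identically zero submatrix `A[α|β]` with `|α|·m + |β|·k > k·m`. -/
theorem not_rectSupport_iff {k m : ℕ} (A : Matrix (Fin k) (Fin m) ℝ) :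
    ¬ RectSupport A ↔
      ∃ (α : Finset (Fin k)) (β : Finset (Fin m)), α.Nonempty ∧ β.Nonempty ∧
        (∀ i ∈ α, ∀ j ∈ β, A i j = 0) ∧ k * m < α.card * m + β.card * k := by
  classical
  constructor
  · intro hns
    by_contra hno
    apply hns
    obtain ⟨f, hfinj, hf⟩ := not_rectSupport_iff' A hno
    have hcard : Fintype.card (Fin k × Fin m) = Fintype.card (Fin m × Fin k) := by
      simp [Nat.mul_comm]
    have hbij : Function.Bijective f :=
      (Fintype.bijective_iff_injective_and_card f).mpr ⟨hfinj, hcard⟩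
    refine ⟨Equiv.ofBijective f hbij, ?_⟩
    rw [Finset.prod_ne_zero_iff]
    intro p _
    exact hf p
  · rintro ⟨α, β, hα, hβ, hz, hcount⟩ ⟨σ, hσ⟩
    rw [Finset.prod_ne_zero_iff] at hσ
    have hne : ∀ p : Fin k × Fin m, A p.1 (σ p).1 ≠ 0 := fun p => hσ p (Finset.mem_univ p)
    have hmap : (α ×ˢ (Finset.univ : Finset (Fin m))).image σ ⊆
        βᶜ ×ˢ (Finset.univ : Finset (Fin k)) := by
      intro q hq
      rw [Finset.mem_image] at hq
      obtain ⟨p, hp, rfl⟩ := hq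
      rw [Finset.mem_product] at hp
      rw [Finset.mem_product, Finset.mem_compl]
      refine ⟨fun hb => hne p (hz p.1 hp.1 (σ p).1 hb), Finset.mem_univ _⟩
    have h1 : α.card * m ≤ βᶜ.card * k := by
      calc α.card * m = (α ×ˢ (Finset.univ : Finset (Fin m))).card := by
            simp [Finset.card_product]
        _ = ((α ×ˢ (Finset.univ : Finset (Fin m))).image σ).card :=
            (Finset.card_image_of_injective _ σ.injective).symm
        _ ≤ (βᶜ ×ˢ (Finset.univ : Finset (Fin k))).card := Finset.card_le_card hmap
        _ = βᶜ.card * k := by simp [Finset.card_product]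
    have hc : β.card + βᶜ.card = m := by
      rw [Finset.card_add_card_compl]; exact Fintype.card_fin m
    have hsum : β.card * k + βᶜ.card * k = m * k := by rw [← Nat.add_mul, hc]
    have hcm : k * m = m * k := Nat.mul_comm k m
    linarith
end

section
/- If k ≠ m and a matrix A ∈ M_{k×m} has fewer than min{k,m} zero entries, then A has total support. -/
open Matrix BigOperators

/-! By Hall's theorem, a nonzero entry of `A ⊗ 1` lies on a nonzero diagonal as soon as, after
deleting its row and column, every set `S` of rows still meets at least `|S|` columns. A set of
rows of `A ⊗ 1` lying over the rows `I` of `A` has at most `|I| m` elements and meets `|N(I)| k`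
columns, where `N(I)` is the set of columns of `A` not vanishing identically on `I`. So it suffices
that `A` has no zero column and `|I| m < |N(I)| k` whenever `∅ ≠ I ≠ all rows`. If `r = |I|` and `d`
columns vanish on `I`, then `r d` is at most the number of zeros, which is `< min k m`; hence
`r + d ≤ min k m`, and for `k ≠ m` this gives `r m + d k < k m`. -/

open Finset

theorem Nat.mul_add_mul_lt_mul_of_mul_lt_min {k m r d : ℕ} (hkm : k ≠ m) (hr : 0 < r)
    (hrk : r < k) (hrd : r * d < min k m) : r * m + d * k < k * m := by
  rcases Nat.eq_zero_or_pos d with rfl | hd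
  · have hm : 0 < m := by simpa using hrd.trans_le (min_le_right k m)
    simpa using Nat.mul_lt_mul_of_pos_right hrk hm
  -- `(r - 1) * (d - 1) ≥ 0`, so `r + d ≤ r * d + 1 ≤ min k m`
  have hsum : r + d ≤ min k m := by nlinarith
  rcases hkm.lt_or_gt with h | h
  · calc r * m + d * k < r * m + d * m := by gcongr
      _ = (r + d) * m := by ring
      _ ≤ k * m := by gcongr; exact hsum.trans (min_le_left k m)
  · calc r * m + d * k < r * k + d * k := by gcongr
      _ = (r + d) * k := by ring
      _ ≤ m * k := by gcongr; exact hsum.trans (min_le_right k m)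
      _ = k * m := mul_comm m k

theorem Finset.exists_equiv_apply_eq_of_hall {R C : Type*} [Fintype R] [Fintype C]
    [DecidableEq R] [DecidableEq C] (hcard : Fintype.card R = Fintype.card C)
    (N : R → Finset C) {p : R} {q : C} (hpq : q ∈ N p)
    (hall : ∀ S : Finset R, p ∉ S → #S ≤ #((S.biUnion N).erase q)) :
    ∃ σ : R ≃ C, σ p = q ∧ ∀ r, σ r ∈ N r := by
  -- force `p ↦ q` and forbid `q` everywhere else
  let t : R → Finset C := fun r => if r = p then {q} else (N r).erase q
  have ht_of_notMem : ∀ S : Finset R, p ∉ S → S.biUnion t = (S.biUnion N).erase q := by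
    intro S hpS
    ext c
    simp only [mem_biUnion, mem_erase]
    constructor
    · rintro ⟨r, hr, hc⟩
      simp only [t, if_neg (ne_of_mem_of_not_mem hr hpS), mem_erase] at hc
      exact ⟨hc.1, r, hr, hc.2⟩
    · rintro ⟨hcq, r, hr, hc⟩
      exact ⟨r, hr, by simp [t, ne_of_mem_of_not_mem hr hpS, hcq, hc]⟩
  have hall_t : ∀ S : Finset R, #S ≤ #(S.biUnion t) := by
    intro S
    by_cases hpS : p ∈ S
    · have hp' : p ∉ S.erase p := notMem_erase p S
      rw [← insert_erase hpS, biUnion_insert, ht_of_notMem _ hp', card_insert_of_notMem hp']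
      have htp : t p = {q} := if_pos rfl
      rw [htp, ← insert_eq, card_insert_of_notMem (notMem_erase q _)]
      exact Nat.succ_le_succ (hall _ hp')
    · rw [ht_of_notMem S hpS]
      exact hall S hpS
  obtain ⟨f, hf_inj, hf⟩ := (all_card_le_biUnion_card_iff_exists_injective t).mp hall_t
  let σ := Equiv.ofBijective f ((Fintype.bijective_iff_injective_and_card f).mpr ⟨hf_inj, hcard⟩)
  have hfp : f p = q := by simpa [t] using hf p
  refine ⟨σ, hfp, fun r => ?_⟩
  show f r ∈ N r
  by_cases hrp : r = p
  · subst hrp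
    exact hfp ▸ hpq
  · have hfr := hf r
    simp only [t, if_neg hrp, mem_erase] at hfr
    exact hfr.2

namespace Matrix

def rowSupport {R C α : Type*} [Fintype C] [Zero α] [DecidableEq α] (A : Matrix R C α) (i : R) :
    Finset C :=
  {j | A i j ≠ 0}

@[simp]
theorem mem_rowSupport {R C α : Type*} [Fintype C] [Zero α] [DecidableEq α]
    {A : Matrix R C α} {i : R} {j : C} : j ∈ A.rowSupport i ↔ A i j ≠ 0 := by
  simp [rowSupport]

variable {R C α : Type*} [Fintype R] [Fintype C] [DecidableEq C]

theorem hasTotalSupport_of_hall [DecidableEq R] [CommMonoidWithZero α] [NoZeroDivisors α]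
    [DecidableEq α] {B : Matrix R C α} (hcard : Fintype.card R = Fintype.card C)
    (hall : ∀ p q, B p q ≠ 0 → ∀ S : Finset R, p ∉ S → #S ≤ #((S.biUnion B.rowSupport).erase q)) :
    HasTotalSupport B := by
  intro p q hpq
  have : Nontrivial α := nontrivial_of_ne _ _ hpq
  obtain ⟨σ, hσp, hσ⟩ := exists_equiv_apply_eq_of_hall hcard B.rowSupport
    (mem_rowSupport.mpr hpq) (hall p q hpq)
  exact ⟨σ, hσp, prod_ne_zero_iff.mpr fun r _ => mem_rowSupport.mp (hσ r)⟩

theorem biUnion_rowSupport_kronOnes [DecidableEq R] [Zero α] [DecidableEq α] (A : Matrix R C α)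
    (S : Finset (R × C)) :
    S.biUnion (kronOnes A).rowSupport = (S.image Prod.fst).biUnion A.rowSupport ×ˢ univ := by
  ext ⟨j, i⟩
  simp [kronOnes]

theorem rectTotalSupport_of_card_lt_card_biUnion [DecidableEq R] [CommMonoidWithZero α]
    [NoZeroDivisors α] [DecidableEq α] {A : Matrix R C α}
    (hfull : univ.biUnion A.rowSupport = univ)
    (hproper : ∀ I : Finset R, I.Nonempty → I ≠ univ →
      #I * Fintype.card C < #(I.biUnion A.rowSupport) * Fintype.card R) :
    RectTotalSupport A := by
  refine hasTotalSupport_of_hall (by simp [Fintype.card_prod, mul_comm]) fun p q _ S hpS => ?_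
  rw [biUnion_rowSupport_kronOnes]
  set I := S.image Prod.fst
  have hSI : #S ≤ #I * Fintype.card C := by
    rw [← card_univ, ← card_product]
    exact card_le_card fun x hx => mem_product.mpr ⟨mem_image_of_mem _ hx, mem_univ _⟩
  rcases S.eq_empty_or_nonempty with rfl | hS
  · simp
  by_cases hI : I = univ
  · have hSp : #S ≤ #((univ : Finset (R × C)).erase p) :=
      card_le_card fun x hx => mem_erase.mpr ⟨ne_of_mem_of_not_mem hx hpS, mem_univ _⟩
    rw [hI, hfull, univ_product_univ, card_erase_of_mem (mem_univ _)]
    rw [card_erase_of_mem (mem_univ _)] at hSp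
    simpa [Fintype.card_prod, mul_comm] using hSp
  · have hlt := hproper I (hS.image _) hI
    have herase := pred_card_le_card_erase (s := I.biUnion A.rowSupport ×ˢ (univ : Finset R)) (a := q)
    rw [card_product, card_univ] at herase
    omega

theorem card_mul_card_compl_biUnion_rowSupport_le [Zero α] [DecidableEq α]
    (A : Matrix R C α) (I : Finset R) :
    #I * #(I.biUnion A.rowSupport)ᶜ ≤ #{x : R × C | A x.1 x.2 = 0} := by
  rw [← card_product]
  refine card_le_card fun x hx => ?_
  simp only [mem_product, mem_compl, mem_biUnion, mem_rowSupport, not_exists, not_and,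
    not_not] at hx
  simpa using hx.2 x.1 hx.1

theorem rectTotalSupport_of_card_zeros_lt [DecidableEq R] [CommMonoidWithZero α]
    [NoZeroDivisors α] [DecidableEq α] {A : Matrix R C α}
    (hRC : Fintype.card R ≠ Fintype.card C)
    (hz : #{x : R × C | A x.1 x.2 = 0} < min (Fintype.card R) (Fintype.card C)) :
    RectTotalSupport A := by
  refine rectTotalSupport_of_card_lt_card_biUnion ?_ fun I hI hIu => ?_
  · have h := A.card_mul_card_compl_biUnion_rowSupport_le univ
    rw [card_univ] at h
    have hzero : #(univ.biUnion A.rowSupport)ᶜ = 0 := by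
      by_contra h0
      have := Nat.le_mul_of_pos_right (Fintype.card R) (Nat.pos_of_ne_zero h0)
      omega
    rwa [card_eq_zero, compl_eq_empty_iff] at hzero
  · have h := A.card_mul_card_compl_biUnion_rowSupport_le I
    have key := Nat.mul_add_mul_lt_mul_of_mul_lt_min hRC hI.card_pos
      ((card_lt_iff_ne_univ I).mpr hIu) (h.trans_lt hz)
    have hsplit := card_add_card_compl (I.biUnion A.rowSupport)
    nlinarith

end Matrix

/-- If `k ≠ m` and `A ∈ M_{k×m}` has fewer than `min k m` zero entries,
then `A` has total support. -/
theorem rectTotalSupport_of_few_zeros {k m : ℕ} (hkm : k ≠ m)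
    (A : Matrix (Fin k) (Fin m) ℝ)
    (hz : {p : Fin k × Fin m | A p.1 p.2 = 0}.ncard < min k m) :
    RectTotalSupport A := by
  refine Matrix.rectTotalSupport_of_card_zeros_lt (by simpa using hkm) ?_
  rw [← Set.ncard_coe_finset, coe_filter]
  simpa using hz
end

section
/- If k = m and a square matrix A ∈ M_k has fewer than k − 1 zero entries, then A has total support. -/
open Matrix BigOperators

/-- If a square matrix `A ∈ M_k` has fewer than `k - 1` zero entries,
then `A` has total support. -/
theorem totalSupport_of_few_zeros {k : ℕ} (A : Matrix (Fin k) (Fin k) ℝ)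
    (hz : {p : Fin k × Fin k | A p.1 p.2 = 0}.ncard < k - 1) :
    HasTotalSupport A := by
  intro p q hpq
  classical
  set N : Fin k → Finset (Fin k) := fun i =>
    if i = p then {q} else Finset.univ.filter (fun j => j ≠ q ∧ A i j ≠ 0) with hN
  have hall : ∀ s : Finset (Fin k), s.card ≤ (s.biUnion N).card := by
    intro s
    by_contra hcon
    push_neg at hcon
    set T := s.erase p with hT
    set U := T.biUnion N with hU
    have hqU : q ∉ U := by
      simp only [hU, Finset.mem_biUnion, not_exists]
      rintro i ⟨hi, hqi⟩
      have hip : i ≠ p := Finset.ne_of_mem_erase hi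
      simp [hN, hip] at hqi
    have hUT : U.card < T.card := by
      by_cases hp : p ∈ s
      · have hsc : T.card + 1 = s.card := by
          rw [hT, Finset.card_erase_of_mem hp]
          have : 1 ≤ s.card := Finset.card_pos.mpr ⟨p, hp⟩
          omega
        have hsub2 : s.biUnion N ⊆ insert q U := by
          intro x hx
          obtain ⟨i, hi, hxi⟩ := Finset.mem_biUnion.mp hx
          by_cases hipp : i = p
          · subst hipp
            simp [hN] at hxi
            simp [hxi]
          · exact Finset.mem_insert_of_mem
              (Finset.mem_biUnion.mpr ⟨i, Finset.mem_erase.mpr ⟨hipp, hi⟩, hxi⟩)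
        have hsup : insert q U ⊆ s.biUnion N := by
          intro x hx
          rcases Finset.mem_insert.mp hx with hxq | hxU
          · subst hxq
            exact Finset.mem_biUnion.mpr ⟨p, hp, by simp [hN]⟩
          · obtain ⟨i, hi, hxi⟩ := Finset.mem_biUnion.mp hxU
            exact Finset.mem_biUnion.mpr ⟨i, Finset.mem_of_mem_erase hi, hxi⟩
        have hcard2 := Finset.card_le_card hsup
        rw [Finset.card_insert_of_notMem hqU] at hcard2
        omega
      · have hTs : T = s := Finset.erase_eq_of_notMem hp
        rw [hU, hTs]
        exact hcon
    have hUq : U ⊆ Finset.univ.erase q := fun x hx =>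
      Finset.mem_erase.mpr ⟨fun h => hqU (h ▸ hx), Finset.mem_univ x⟩
    have htk : T.card ≤ k - 1 := by
      have hsub : T ⊆ Finset.univ.erase p := fun x hx =>
        Finset.mem_erase.mpr ⟨Finset.ne_of_mem_erase hx, Finset.mem_univ x⟩
      have := Finset.card_le_card hsub
      simpa using this
    set C := (Finset.univ.erase q) \ U with hC
    have hCcard : C.card = k - 1 - U.card := by
      rw [hC, Finset.card_sdiff_of_subset hUq]
      simp
    have hsub : ↑(T ×ˢ C) ⊆ {p : Fin k × Fin k | A p.1 p.2 = 0} := by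
      rintro ⟨i, j⟩ hij
      obtain ⟨hi, hj⟩ := Finset.mem_product.mp (by exact_mod_cast hij)
      simp only [Set.mem_setOf_eq]
      by_contra hA
      have hip : i ≠ p := Finset.ne_of_mem_erase hi
      have hjq : j ≠ q := (Finset.mem_erase.mp (Finset.mem_sdiff.mp hj).1).1
      exact (Finset.mem_sdiff.mp hj).2
        (Finset.mem_biUnion.mpr ⟨i, hi, by simp [hN, hip, hjq, hA]⟩)
    have hle : (T ×ˢ C).card ≤ {p : Fin k × Fin k | A p.1 p.2 = 0}.ncard := by
      rw [← Set.ncard_coe_finset]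
      exact Set.ncard_le_ncard hsub (Set.toFinite _)
    rw [Finset.card_product, hCcard] at hle
    have hkey : k - 1 ≤ T.card * (k - 1 - U.card) := by
      obtain ⟨a, ha⟩ : ∃ a, T.card = a + 1 := ⟨T.card - 1, by omega⟩
      have htlt : T.card < k := by omega
      obtain ⟨c, hc⟩ : ∃ c, k - 1 - U.card = c + 1 := ⟨k - 2 - U.card, by omega⟩
      have hck : k - 1 ≤ T.card + c := by omega
      calc k - 1 ≤ T.card + c := hck
        _ ≤ T.card * (c + 1) := by nlinarith [ha]
        _ = T.card * (k - 1 - U.card) := by rw [hc]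
    omega
  obtain ⟨f, hfinj, hfN⟩ := (Finset.all_card_le_biUnion_card_iff_exists_injective N).mp hall
  have hbij : Function.Bijective f := Finite.injective_iff_bijective.mp hfinj
  refine ⟨Equiv.ofBijective f hbij, ?_, ?_⟩
  · have := hfN p
    simpa [hN, Equiv.ofBijective] using this
  · rw [Finset.prod_ne_zero_iff]
    intro i _
    show A i (f i) ≠ 0
    by_cases hip : i = p
    · have hfp : f i = q := by have := hfN i; simpa [hN, hip] using this
      rw [hfp, hip]; exact hpq
    · have := hfN i
      simp only [hN, if_neg hip, Finset.mem_filter] at this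
      exact this.2.2
end

section
/- A positive map T : M_k → M_m has support if and only if for every positive semidefinite Hermitian matrix A ∈ M_k, rank(A)·m ≤ rank(T(A))·k. -/
open Matrix BigOperators
open scoped ComplexOrder

/-- A positive map `T : M_k → M_m` has support if for all orthonormal bases
`{v_i}` of `ℂ^k` and `{w_j}` of `ℂ^m`, the matrix `(tr(T(v_i v_i*) w_j w_j*))` has
support as a rectangular matrix. -/
def MapSupport {k m : ℕ}
    (T : Matrix (Fin k) (Fin k) ℂ → Matrix (Fin m) (Fin m) ℂ) : Prop :=
  ∀ (v : Fin k → Fin k → ℂ) (w : Fin m → Fin m → ℂ),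
    (∀ i j, star (v i) ⬝ᵥ v j = if i = j then 1 else 0) →
    (∀ i j, star (w i) ⬝ᵥ w j = if i = j then 1 else 0) →
    RectSupport (Matrix.of fun i j =>
      ((T (Matrix.vecMulVec (v i) (star (v i)))) *
        Matrix.vecMulVec (w j) (star (w j))).trace)

/-- A positive map `T : M_k → M_m` has total support if for all orthonormal bases
the matrix `(tr(T(v_i v_i*) w_j w_j*))` has total support. -/
def MapTotalSupport {k m : ℕ}
    (T : Matrix (Fin k) (Fin k) ℂ → Matrix (Fin m) (Fin m) ℂ) : Prop :=
  ∀ (v : Fin k → Fin k → ℂ) (w : Fin m → Fin m → ℂ),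
    (∀ i j, star (v i) ⬝ᵥ v j = if i = j then 1 else 0) →
    (∀ i j, star (w i) ⬝ᵥ w j = if i = j then 1 else 0) →
    RectTotalSupport (Matrix.of fun i j =>
      ((T (Matrix.vecMulVec (v i) (star (v i)))) *
        Matrix.vecMulVec (w j) (star (w j))).trace)

/-- `T` is doubly stochastic: `T(Id/√k) = Id/√m` and `T*(Id/√m) = Id/√k` (the latter
expressed through the trace inner product). -/
def IsDoublyStochasticMap {k m : ℕ}
    (T : Matrix (Fin k) (Fin k) ℂ → Matrix (Fin m) (Fin m) ℂ) : Prop :=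
  T ((Real.sqrt k : ℂ)⁻¹ • 1) = (Real.sqrt m : ℂ)⁻¹ • 1 ∧
  ∀ X, (Real.sqrt m : ℂ)⁻¹ * (T X).trace = (Real.sqrt k : ℂ)⁻¹ * X.trace


/-!
By Hall's theorem, `B ⊗ 1_{m×k}` has a nonzero permutation diagonal iff every set `S` of rows
of `B` satisfies `|S| m ≤ |N(S)| k`, where `N(S)` is the set of columns in which some row of `S`
has a nonzero entry. For `B i j = ⟪w j, T (v i v iᴴ) w j⟫` and `T` positive, `j ∉ N(S)` means
exactly that `w j` lies in the kernel of `T(P_S)`, `P_S = ∑_{i ∈ S} v i v iᴴ`. So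
`|S| = rank P_S` and `rank T(P_S) ≤ |N(S)|`, which turns the rank inequality into Hall's
condition. Conversely, if `A ⪰ 0` is diagonalised by `v` and `T A` by `w`, then `N(supp A)`
lies in the support of `T A`, because `T A` dominates every `T (λ_i v i v iᴴ)`.
-/

open Finset

section Hall

variable {R C α : Type*} [Fintype R] [Fintype C] [DecidableEq R] [DecidableEq C]
  [CommMonoidWithZero α] [NoZeroDivisors α] [Nontrivial α] [DecidableEq α]

-- The Hall condition for `B ⊗ 1` only has to be checked on unions of row blocks.
theorem rectSupport_iff_card_mul_le {B : Matrix R C α} :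
    RectSupport B ↔ ∀ s : Finset R,
      #s * Fintype.card C ≤ #(s.biUnion fun i => {j | B i j ≠ 0}) * Fintype.card R := by
  simp only [RectSupport, HasSupport, kronOnes, Matrix.of_apply, prod_ne_zero_iff, mem_univ,
    true_imp_iff]
  constructor
  · rintro ⟨σ, hσ⟩ s
    have hmaps : ∀ p ∈ s ×ˢ (univ : Finset C),
        σ p ∈ (s.biUnion fun i => ({j | B i j ≠ 0} : Finset C)) ×ˢ (univ : Finset R) := by
      rintro p hp
      simp only [mem_product, mem_univ, and_true, mem_biUnion, mem_filter, true_and] at hp ⊢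
      exact ⟨p.1, hp, hσ p⟩
    simpa using card_le_card_of_injOn σ hmaps σ.injective.injOn
  · intro hall
    let N : R × C → Finset (C × R) := fun p => ({j | B p.1 j ≠ 0} : Finset C) ×ˢ univ
    have hHall : ∀ t : Finset (R × C), #t ≤ #(t.biUnion N) := by
      intro t
      have hsub : t ⊆ t.image Prod.fst ×ˢ univ := fun p hp => by simpa using ⟨p.2, hp⟩
      have hbiUnion : t.biUnion N =
          ((t.image Prod.fst).biUnion fun i => ({j | B i j ≠ 0} : Finset C)) ×ˢ univ := by
        ext q; simp [N]
      calc #t ≤ #(t.image Prod.fst) * Fintype.card C := by simpa using card_le_card hsub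
        _ ≤ _ := hall _
        _ = #(t.biUnion N) := by simp [hbiUnion]
    obtain ⟨f, hf, hfN⟩ := (all_card_le_biUnion_card_iff_exists_injective N).1 hHall
    have hbij : Function.Bijective f :=
      (Fintype.bijective_iff_injective_and_card f).2 ⟨hf, by simp [mul_comm]⟩
    exact ⟨Equiv.ofBijective f hbij, fun p => by simpa [N] using hfN p⟩

end Hall

section LinearAlgebra

variable {ι n p K : Type*} [Fintype n]

theorem Matrix.trace_mul_vecMulVec_star [CommSemiring K] [Star K] (M : Matrix n n K)
    (w : n → K) : (M * vecMulVec w (star w)).trace = star w ⬝ᵥ M *ᵥ w := by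
  rw [mul_vecMulVec, trace_vecMulVec, dotProduct_comm]

theorem linearIndependent_of_star_dotProduct_eq_ite [DecidableEq ι] [CommRing K] [Star K]
    {v : ι → n → K} (hv : ∀ i j, star (v i) ⬝ᵥ v j = if i = j then 1 else 0) :
    LinearIndependent K v := by
  rw [linearIndependent_iff']
  intro s g hg i hi
  simpa [dotProduct_sum, hv, hi] using congrArg (star (v i) ⬝ᵥ ·) hg

theorem Matrix.sum_vecMulVec_star_mulVec_of_mem [DecidableEq ι] [CommSemiring K] [Star K]
    {v : ι → n → K} (hv : ∀ i j, star (v i) ⬝ᵥ v j = if i = j then 1 else 0) {s : Finset ι}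
    {i : ι} (hi : i ∈ s) : (∑ l ∈ s, vecMulVec (v l) (star (v l))) *ᵥ v i = v i := by
  simp [sum_mulVec, vecMulVec_mulVec, hv, hi]

theorem Matrix.card_le_rank_of_mem_range [Fintype p] [Field K] {A : Matrix p n K}
    {v : ι → p → K} (hv : LinearIndependent K v) (s : Finset ι)
    (hs : ∀ i ∈ s, v i ∈ LinearMap.range A.mulVecLin) : #s ≤ A.rank := by
  have hspan : Submodule.span K (Set.range (v ∘ Subtype.val : s → p → K)) ≤
      LinearMap.range A.mulVecLin :=
    Submodule.span_le.2 <| Set.range_subset_iff.2 fun i => hs i i.2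
  simpa [Matrix.rank, finrank_span_eq_card (hv.comp _ Subtype.val_injective)] using
    Submodule.finrank_mono hspan

theorem Matrix.rank_le_card_of_mulVec_eq_zero [DecidableEq n] [Field K] {A : Matrix p n K}
    {w : n → n → K} (hw : LinearIndependent K w) (s : Finset n) (hs : ∀ j ∉ s, A *ᵥ w j = 0) :
    A.rank ≤ #s := by
  have hspan : Submodule.span K (Set.range (w ∘ Subtype.val : ↥sᶜ → n → K)) ≤
      LinearMap.ker A.mulVecLin :=
    Submodule.span_le.2 <| Set.range_subset_iff.2 fun j => hs j (mem_compl.1 j.2)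
  have hker := Submodule.finrank_mono hspan
  rw [finrank_span_eq_card (hw.comp _ Subtype.val_injective), Fintype.card_coe,
    card_compl] at hker
  have hrank := LinearMap.finrank_range_add_finrank_ker A.mulVecLin
  rw [Module.finrank_fintype_fun_eq_card] at hrank
  have := card_le_univ s
  rw [Matrix.rank]
  omega

end LinearAlgebra

section Positivity

variable {ι n p 𝕜 : Type*} [Fintype n] [RCLike 𝕜]

theorem Matrix.dotProduct_sum_mulVec_eq_zero_iff {R : Type*} [CommRing R] [PartialOrder R]
    [StarRing R] [StarOrderedRing R] {s : Finset ι} {M : ι → Matrix n n R}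
    (hM : ∀ i ∈ s, (M i).PosSemidef) (x : n → R) :
    star x ⬝ᵥ (∑ i ∈ s, M i) *ᵥ x = 0 ↔ ∀ i ∈ s, star x ⬝ᵥ M i *ᵥ x = 0 := by
  rw [sum_mulVec, dotProduct_sum]
  exact sum_eq_zero_iff_of_nonneg fun i hi => (hM i hi).dotProduct_mulVec_nonneg x

variable [DecidableEq n]

theorem Matrix.IsHermitian.star_eigenvectorBasis_dotProduct {A : Matrix n n 𝕜}
    (hA : A.IsHermitian) (i j : n) :
    star ⇑(hA.eigenvectorBasis i) ⬝ᵥ ⇑(hA.eigenvectorBasis j) = if i = j then 1 else 0 := by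
  rw [dotProduct_comm, ← EuclideanSpace.inner_eq_star_dotProduct]
  exact orthonormal_iff_ite.1 hA.eigenvectorBasis.orthonormal i j

theorem Matrix.IsHermitian.eq_sum_eigenvalues_smul_vecMulVec {A : Matrix n n 𝕜}
    (hA : A.IsHermitian) :
    A = ∑ i, (hA.eigenvalues i : 𝕜) •
      vecMulVec ⇑(hA.eigenvectorBasis i) (star ⇑(hA.eigenvectorBasis i)) := by
  conv_lhs => rw [hA.spectral_theorem]
  ext a b
  simp only [Unitary.conjStarAlgAut_apply, mul_apply, diagonal_apply, sum_apply, smul_apply,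
    vecMulVec_apply]
  simp [mul_assoc, mul_left_comm]

theorem Matrix.PosSemidef.dotProduct_map_vecMulVec_eigenvectorBasis_mulVec_eq_zero [Fintype p]
    {T : Matrix n n 𝕜 →ₗ[𝕜] Matrix p p 𝕜} (hT : ∀ A, A.PosSemidef → (T A).PosSemidef)
    {A : Matrix n n 𝕜} (hA : A.PosSemidef) {x : p → 𝕜} (hx : T A *ᵥ x = 0) {i : n}
    (hi : hA.1.eigenvalues i ≠ 0) :
    star x ⬝ᵥ T (vecMulVec ⇑(hA.1.eigenvectorBasis i) (star ⇑(hA.1.eigenvectorBasis i))) *ᵥ x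
      = 0 := by
  set P := fun l => vecMulVec ⇑(hA.1.eigenvectorBasis l) (star ⇑(hA.1.eigenvectorBasis l))
  have hsum : star x ⬝ᵥ (∑ l, T ((hA.1.eigenvalues l : 𝕜) • P l)) *ᵥ x = 0 := by
    rw [← map_sum, ← hA.1.eq_sum_eigenvalues_smul_vecMulVec, hx, dotProduct_zero]
  have hterms : ∀ l ∈ univ, (T ((hA.1.eigenvalues l : 𝕜) • P l)).PosSemidef :=
    fun l _ => hT _ <| (posSemidef_vecMulVec_self_star _).smul <|
      RCLike.ofReal_nonneg.2 (hA.eigenvalues_nonneg l)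
  have hterm := (dotProduct_sum_mulVec_eq_zero_iff hterms x).1 hsum i (mem_univ i)
  rw [map_smul, smul_mulVec, dotProduct_smul, smul_eq_mul, mul_eq_zero] at hterm
  exact hterm.resolve_left (RCLike.ofReal_ne_zero.2 hi)

end Positivity

theorem mapSupport_iff_card_mul_le {k m : ℕ}
    (T : Matrix (Fin k) (Fin k) ℂ → Matrix (Fin m) (Fin m) ℂ) :
    MapSupport T ↔ ∀ (v : Fin k → Fin k → ℂ) (w : Fin m → Fin m → ℂ),
      (∀ i j, star (v i) ⬝ᵥ v j = if i = j then 1 else 0) →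
      (∀ i j, star (w i) ⬝ᵥ w j = if i = j then 1 else 0) →
      ∀ s : Finset (Fin k), #s * m ≤
        #(s.biUnion fun i => {j | star (w j) ⬝ᵥ T (vecMulVec (v i) (star (v i))) *ᵥ w j ≠ 0}) *
          k := by
  simp only [MapSupport, rectSupport_iff_card_mul_le, of_apply, trace_mul_vecMulVec_star,
    Fintype.card_fin]
  rfl

/-- A positive map `T : M_k → M_m` has support iff
`rank(A)·m ≤ rank(T(A))·k` for every positive semidefinite `A`. -/
theorem mapSupport_iff_rank {k m : ℕ}
    (T : Matrix (Fin k) (Fin k) ℂ →ₗ[ℂ] Matrix (Fin m) (Fin m) ℂ)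
    (hTpos : ∀ A : Matrix (Fin k) (Fin k) ℂ, A.PosSemidef → (T A).PosSemidef) :
    MapSupport (fun X => T X) ↔
      ∀ A : Matrix (Fin k) (Fin k) ℂ, A.PosSemidef →
        A.rank * m ≤ (T A).rank * k := by
  rw [mapSupport_iff_card_mul_le]
  constructor
  · intro hsupp A hA
    have hTA := (hTpos A hA).1
    have hcard := hsupp _ _ hA.1.star_eigenvectorBasis_dotProduct
      hTA.star_eigenvectorBasis_dotProduct {i | hA.1.eigenvalues i ≠ 0}
    rw [hA.1.rank_eq_card_non_zero_eigs, hTA.rank_eq_card_non_zero_eigs, Fintype.card_subtype,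
      Fintype.card_subtype]
    refine hcard.trans (Nat.mul_le_mul_right _ (card_le_card fun j hj => ?_))
    simp only [mem_biUnion, mem_filter, mem_univ, true_and] at hj ⊢
    obtain ⟨i, hi, hij⟩ := hj
    intro hj0
    have hker : T A *ᵥ ⇑(hTA.eigenvectorBasis j) = 0 := by
      simpa [hj0] using hTA.mulVec_eigenvectorBasis j
    exact hij (hA.dotProduct_map_vecMulVec_eigenvectorBasis_mulVec_eq_zero hTpos hker hi)
  · intro hrank v w hv hw s
    set A := ∑ i ∈ s, vecMulVec (v i) (star (v i))
    have hA : A.PosSemidef := posSemidef_sum s fun i _ => posSemidef_vecMulVec_self_star (v i)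
    calc #s * m ≤ A.rank * m := by
          gcongr
          exact card_le_rank_of_mem_range (linearIndependent_of_star_dotProduct_eq_ite hv) s
            fun i hi => ⟨v i, sum_vecMulVec_star_mulVec_of_mem hv hi⟩
      _ ≤ (T A).rank * k := hrank A hA
      _ ≤ _ := by
        gcongr
        refine rank_le_card_of_mulVec_eq_zero (linearIndependent_of_star_dotProduct_eq_ite hw) _
          fun j hj => ?_
        rw [← (hTpos A hA).dotProduct_mulVec_zero_iff, map_sum,
          dotProduct_sum_mulVec_eq_zero_iff fun i _ => hTpos _ (posSemidef_vecMulVec_self_star _)]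
        simpa using hj
end

section
/- Every doubly stochastic positive map S : M_k → M_m has total support. Consequently, for every positive semidefinite Hermitian A ∈ M_k, rank(A)·m ≤ rank(S(A))·k. -/
open Matrix BigOperators
open scoped ComplexOrder

section TotalSupport

variable {R C α β : Type*} [Fintype R] [Fintype C]

theorem hasTotalSupport_iff [CommMonoidWithZero α] [NoZeroDivisors α] [Nontrivial α]
    {A : Matrix R C α} :
    HasTotalSupport A ↔ ∀ p q, A p q ≠ 0 → ∃ σ : R ≃ C, σ p = q ∧ ∀ i, A i (σ i) ≠ 0 := by
  simp only [HasTotalSupport, Finset.prod_ne_zero_iff, Finset.mem_univ, true_implies]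

theorem HasTotalSupport.of_ne_zero_iff {C' : Type*} [Fintype C'] [CommMonoidWithZero α]
    [NoZeroDivisors α] [Nontrivial α] [CommMonoidWithZero β] [NoZeroDivisors β] [Nontrivial β]
    {A : Matrix R C' β} {B : Matrix R C α} (e : C' ≃ C)
    (hAB : ∀ i j, A i j ≠ 0 ↔ B i (e j) ≠ 0) (hA : HasTotalSupport A) : HasTotalSupport B := by
  rw [hasTotalSupport_iff] at hA ⊢
  intro p q hpq
  obtain ⟨σ, hσp, hσ⟩ := hA p (e.symm q) ((hAB _ _).2 (by simpa using hpq))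
  exact ⟨σ.trans e, by simp [hσp], fun i => (hAB _ _).1 (hσ i)⟩

end TotalSupport

section Birkhoff

variable {n 𝕜 : Type*} [Fintype n] [DecidableEq n]
  [Field 𝕜] [LinearOrder 𝕜] [IsStrictOrderedRing 𝕜]

theorem hasTotalSupport_of_eq_sum_perm {M : Matrix n n 𝕜} (w : Equiv.Perm n → 𝕜)
    (hw : ∀ σ, 0 ≤ w σ) (hM : ∑ σ, w σ • σ.permMatrix 𝕜 = M) : HasTotalSupport M := by
  have hentry : ∀ i j, M i j = ∑ σ : Equiv.Perm n, if σ i = j then w σ else 0 := by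
    intro i j
    simp [← hM, Matrix.sum_apply, Equiv.toPEquiv_apply]
  rw [hasTotalSupport_iff]
  intro p q hpq
  obtain ⟨σ, hσp, hσ⟩ : ∃ σ : Equiv.Perm n, σ p = q ∧ 0 < w σ := by
    by_contra! h
    refine hpq ((hentry p q).trans (Finset.sum_eq_zero fun σ _ => ?_))
    split_ifs with hσ
    exacts [le_antisymm (h σ hσ) (hw σ), rfl]
  refine ⟨σ, hσp, fun i => (hσ.trans_le ?_).ne'⟩
  rw [hentry]
  refine (Finset.single_le_sum (f := fun τ : Equiv.Perm n => if τ i = σ i then w τ else 0)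
    (fun τ _ => ?_) (Finset.mem_univ σ)).trans_eq' (by simp)
  split_ifs
  exacts [hw τ, le_rfl]

theorem hasTotalSupport_of_sum_eq {M : Matrix n n 𝕜} {s : 𝕜} (hM : ∀ i j, 0 ≤ M i j)
    (hrow : ∀ i, ∑ j, M i j = s) (hcol : ∀ j, ∑ i, M i j = s) : HasTotalSupport M := by
  intro p q hpq
  have hs : 0 ≤ s := hrow p ▸ Finset.sum_nonneg fun j _ => hM p j
  obtain ⟨M', hM', rfl⟩ := (exists_mem_doublyStochastic_eq_smul_iff hs).2 ⟨hM, hrow, hcol⟩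
  obtain ⟨w, hw0, -, hw⟩ := exists_eq_sum_perm_of_mem_doublyStochastic hM'
  refine hasTotalSupport_of_eq_sum_perm (fun σ => s * w σ) (fun σ => mul_nonneg hs (hw0 σ)) ?_
    p q hpq
  simp [← hw, Finset.smul_sum, mul_smul]

end Birkhoff

section Rectangular

variable {R C 𝕜 : Type*} [Fintype R] [Fintype C] [DecidableEq R] [DecidableEq C]

theorem rectTotalSupport_of_sum_eq [Field 𝕜] [LinearOrder 𝕜] [IsStrictOrderedRing 𝕜]
    {B : Matrix R C 𝕜} {r c : 𝕜} (hB : ∀ i j, 0 ≤ B i j)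
    (hrow : ∀ i, ∑ j, B i j = r) (hcol : ∀ j, ∑ i, B i j = c) : RectTotalSupport B := by
  -- `kronOnes B` with its columns reordered: all its row and column sums are the mass of `B`.
  set M : Matrix (R × C) (R × C) 𝕜 := of fun p q => B p.1 q.2
  have hM : HasTotalSupport M := by
    refine hasTotalSupport_of_sum_eq (s := ∑ i, ∑ j, B i j) (fun p q => hB _ _)
      (fun p => ?_) (fun q => ?_)
    · simp [M, Fintype.sum_prod_type, hrow]
    · rw [Fintype.sum_prod_type, Finset.sum_comm, Finset.sum_comm (f := fun i j => B i j)]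
      simp [M, hcol]
  exact hM.of_ne_zero_iff (Equiv.prodComm R C) fun _ _ => Iff.rfl

theorem rectTotalSupport_of_complex_sum_eq {B : Matrix R C ℂ} {r c : ℂ} (hB : ∀ i j, 0 ≤ B i j)
    (hrow : ∀ i, ∑ j, B i j = r) (hcol : ∀ j, ∑ i, B i j = c) : RectTotalSupport B := by
  have hre : RectTotalSupport (B.map Complex.re) :=
    rectTotalSupport_of_sum_eq (r := r.re) (c := c.re)
      (fun i j => (Complex.nonneg_iff.1 (hB i j)).1)
      (fun i => by simp [← hrow i, Complex.re_sum]) (fun j => by simp [← hcol j, Complex.re_sum])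
  refine hre.of_ne_zero_iff (Equiv.refl _) fun p q => ?_
  simp [kronOnes, Complex.ext_iff, (Complex.nonneg_iff.1 (hB p.1 q.1)).2.symm]

end Rectangular

section RankOne

variable {n α : Type*} [Fintype n]

theorem trace_mul_vecMulVec [CommSemiring α] (M : Matrix n n α) (x y : n → α) :
    (M * vecMulVec x y).trace = y ⬝ᵥ (M *ᵥ x) := by
  rw [mul_vecMulVec, trace_vecMulVec, dotProduct_comm]

theorem sum_vecMulVec_star_eq_one [DecidableEq n] [CommRing α] [StarRing α] (v : n → n → α)
    (hv : ∀ i j, star (v i) ⬝ᵥ v j = if i = j then 1 else 0) :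
    ∑ i, vecMulVec (v i) (star (v i)) = 1 := by
  set U : Matrix n n α := (of v)ᵀ
  have hU : Uᴴ * U = 1 := by
    ext i j
    simpa [U, mul_apply, dotProduct, one_apply] using hv i j
  rw [← mul_eq_one_comm.1 hU]
  ext a b
  simp [U, mul_apply, Matrix.sum_apply, vecMulVec_apply]

theorem eq_sum_smul_vecMulVec_star [DecidableEq n] [CommRing α] [StarRing α] {v : n → n → α}
    (hv : ∀ i j, star (v i) ⬝ᵥ v j = if i = j then 1 else 0) {A : Matrix n n α} {d : n → α}
    (hA : ∀ i, A *ᵥ v i = d i • v i) : A = ∑ i, d i • vecMulVec (v i) (star (v i)) := by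
  calc A = A * ∑ i, vecMulVec (v i) (star (v i)) := by rw [sum_vecMulVec_star_eq_one v hv, mul_one]
    _ = _ := by simp [Finset.mul_sum, mul_vecMulVec, hA]

theorem OrthonormalBasis.star_dotProduct_eq_ite [DecidableEq n] {𝕜 : Type*} [RCLike 𝕜]
    (b : OrthonormalBasis n 𝕜 (EuclideanSpace 𝕜 n)) (i j : n) :
    star ⇑(b i) ⬝ᵥ ⇑(b j) = if i = j then 1 else 0 := by
  rw [dotProduct_comm, ← EuclideanSpace.inner_eq_star_dotProduct]
  exact orthonormal_iff_ite.1 b.orthonormal i j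

end RankOne

section Pairing

variable {n n' : Type*} [Fintype n']

def pairingMatrix (T : Matrix n n ℂ → Matrix n' n' ℂ) (v : n → n → ℂ) (w : n' → n' → ℂ) :
    Matrix n n' ℂ :=
  of fun i j => (T (vecMulVec (v i) (star (v i))) * vecMulVec (w j) (star (w j))).trace

theorem pairingMatrix_nonneg [Fintype n] {T : Matrix n n ℂ → Matrix n' n' ℂ}
    (hT : ∀ A, A.PosSemidef → (T A).PosSemidef) (v : n → n → ℂ) (w : n' → n' → ℂ) (i : n)
    (j : n') : 0 ≤ pairingMatrix T v w i j := by
  rw [pairingMatrix, of_apply, trace_mul_vecMulVec]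
  exact (hT _ (posSemidef_vecMulVec_self_star _)).dotProduct_mulVec_nonneg _

theorem sum_pairingMatrix_row_eq_trace [DecidableEq n'] (T : Matrix n n ℂ → Matrix n' n' ℂ)
    (v : n → n → ℂ) {w : n' → n' → ℂ} (hw : ∀ i j, star (w i) ⬝ᵥ w j = if i = j then 1 else 0)
    (i : n) :
    ∑ j, pairingMatrix T v w i j = (T (vecMulVec (v i) (star (v i)))).trace := by
  simp only [pairingMatrix, of_apply]
  rw [← trace_sum, ← Finset.mul_sum, sum_vecMulVec_star_eq_one w hw, mul_one]

theorem sum_mul_pairingMatrix [Fintype n] (T : Matrix n n ℂ →ₗ[ℂ] Matrix n' n' ℂ) (v : n → n → ℂ)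
    (w : n' → n' → ℂ) (d : n → ℂ) (j : n') :
    ∑ i, d i * pairingMatrix T v w i j =
      (T (∑ i, d i • vecMulVec (v i) (star (v i))) * vecMulVec (w j) (star (w j))).trace := by
  simp [pairingMatrix, Finset.sum_mul, trace_sum, trace_smul]

end Pairing

section Counting

variable {R C α : Type*} [Fintype R] [Fintype C]
  [AddCommMonoid α] [PartialOrder α] [IsOrderedAddMonoid α]

open Finset in
theorem card_nsmul_le_card_nsmul_of_sum_eq {B : Matrix R C α} {r c : α} (hB : ∀ i j, 0 ≤ B i j)
    (hrow : ∀ i, ∑ j, B i j = r) (hcol : ∀ j, ∑ i, B i j = c) {I : Finset R} {J : Finset C}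
    (hIJ : ∀ i ∈ I, ∀ j ∉ J, B i j = 0) : #I • r ≤ #J • c :=
  calc #I • r = ∑ i ∈ I, ∑ j, B i j := by simp [hrow]
    _ = ∑ i ∈ I, ∑ j ∈ J, B i j :=
      sum_congr rfl fun i hi => (sum_subset (subset_univ J) fun j _ hj => hIJ i hi j hj).symm
    _ ≤ ∑ i, ∑ j ∈ J, B i j :=
      sum_le_sum_of_subset_of_nonneg (subset_univ I) fun i _ _ => sum_nonneg fun j _ => hB i j
    _ = #J • c := sum_comm.trans (by simp [hcol])

end Counting

theorem mul_le_mul_of_nsmul_sqrt_div_le {a b k m : ℕ} (ha : a ≤ k)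
    (h : a • ((Real.sqrt m : ℂ) / Real.sqrt k) ≤ b • ((Real.sqrt k : ℂ) / Real.sqrt m)) :
    a * m ≤ b * k := by
  rcases eq_or_ne k 0 with rfl | hk
  · simp [Nat.le_zero.1 ha]
  rcases eq_or_ne m 0 with rfl | hm
  · simp
  have hk' : 0 < Real.sqrt k := Real.sqrt_pos.2 (by positivity)
  have hm' : 0 < Real.sqrt m := Real.sqrt_pos.2 (by positivity)
  have h' : (a : ℝ) * (Real.sqrt m / Real.sqrt k) ≤ b * (Real.sqrt k / Real.sqrt m) := by
    simpa only [nsmul_eq_mul, ← Complex.ofReal_natCast, ← Complex.ofReal_div,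
      ← Complex.ofReal_mul, Complex.real_le_real] using h
  have hscaled := mul_le_mul_of_nonneg_right h' (mul_pos hk' hm').le
  field_simp at hscaled
  rw [Real.sq_sqrt (Nat.cast_nonneg _), Real.sq_sqrt (Nat.cast_nonneg _)] at hscaled
  rw [mul_comm b]
  exact_mod_cast hscaled

namespace IsDoublyStochasticMap

variable {k m : ℕ}

theorem trace_apply {T : Matrix (Fin k) (Fin k) ℂ → Matrix (Fin m) (Fin m) ℂ}
    (hT : IsDoublyStochasticMap T) (X : Matrix (Fin k) (Fin k) ℂ) :
    (T X).trace = (Real.sqrt m : ℂ) / Real.sqrt k * X.trace := by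
  rcases eq_or_ne m 0 with rfl | hm
  · simp [Matrix.trace]
  have hm' : (Real.sqrt m : ℂ) ≠ 0 := by exact_mod_cast (Real.sqrt_pos.2 (by positivity)).ne'
  calc (T X).trace = Real.sqrt m * ((Real.sqrt m : ℂ)⁻¹ * (T X).trace) := by
        rw [← mul_assoc, mul_inv_cancel₀ hm', one_mul]
    _ = _ := by rw [hT.2 X]; ring

theorem map_one {S : Matrix (Fin k) (Fin k) ℂ →ₗ[ℂ] Matrix (Fin m) (Fin m) ℂ}
    (hS : IsDoublyStochasticMap S) : S 1 = ((Real.sqrt k : ℂ) / Real.sqrt m) • 1 := by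
  rcases eq_or_ne k 0 with rfl | hk
  · simp [Subsingleton.elim (1 : Matrix (Fin 0) (Fin 0) ℂ) 0]
  have hk' : (Real.sqrt k : ℂ) ≠ 0 := by exact_mod_cast (Real.sqrt_pos.2 (by positivity)).ne'
  calc S 1 = (Real.sqrt k : ℂ) • S ((Real.sqrt k : ℂ)⁻¹ • 1) := by
        rw [map_smul, smul_smul, mul_inv_cancel₀ hk', one_smul]
    _ = _ := by rw [hS.1, smul_smul, div_eq_mul_inv]

variable {S : Matrix (Fin k) (Fin k) ℂ →ₗ[ℂ] Matrix (Fin m) (Fin m) ℂ} {v : Fin k → Fin k → ℂ}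
  {w : Fin m → Fin m → ℂ}

theorem sum_pairingMatrix_row (hS : IsDoublyStochasticMap S)
    (hv : ∀ i j, star (v i) ⬝ᵥ v j = if i = j then 1 else 0)
    (hw : ∀ i j, star (w i) ⬝ᵥ w j = if i = j then 1 else 0) (i : Fin k) :
    ∑ j, pairingMatrix S v w i j = (Real.sqrt m : ℂ) / Real.sqrt k := by
  rw [sum_pairingMatrix_row_eq_trace _ _ hw, hS.trace_apply, trace_vecMulVec, dotProduct_comm, hv,
    if_pos rfl, mul_one]

theorem sum_pairingMatrix_col (hS : IsDoublyStochasticMap S)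
    (hv : ∀ i j, star (v i) ⬝ᵥ v j = if i = j then 1 else 0)
    (hw : ∀ i j, star (w i) ⬝ᵥ w j = if i = j then 1 else 0) (j : Fin m) :
    ∑ i, pairingMatrix S v w i j = (Real.sqrt k : ℂ) / Real.sqrt m := by
  simpa [sum_vecMulVec_star_eq_one v hv, hS.map_one, trace_vecMulVec, dotProduct_comm (w j), hw]
    using sum_mul_pairingMatrix S v w 1 j

theorem mapTotalSupport (hSpos : ∀ A, A.PosSemidef → (S A).PosSemidef)
    (hS : IsDoublyStochasticMap S) : MapTotalSupport S := fun _ _ hv hw =>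
  rectTotalSupport_of_complex_sum_eq (pairingMatrix_nonneg hSpos _ _)
    (hS.sum_pairingMatrix_row hv hw) (hS.sum_pairingMatrix_col hv hw)

open Finset in
theorem rank_mul_le (hSpos : ∀ A, A.PosSemidef → (S A).PosSemidef) (hS : IsDoublyStochasticMap S)
    {A : Matrix (Fin k) (Fin k) ℂ} (hA : A.PosSemidef) : A.rank * m ≤ (S A).rank * k := by
  have hSA := hSpos A hA
  set v := fun i => ⇑(hA.isHermitian.eigenvectorBasis i)
  set w := fun j => ⇑(hSA.isHermitian.eigenvectorBasis j)
  have hv := hA.isHermitian.eigenvectorBasis.star_dotProduct_eq_ite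
  have hw := hSA.isHermitian.eigenvectorBasis.star_dotProduct_eq_ite
  set B := pairingMatrix S v w
  have hB := pairingMatrix_nonneg hSpos v w
  have hsum (j : Fin m) :
      ∑ i, (hA.isHermitian.eigenvalues i : ℂ) * B i j = hSA.isHermitian.eigenvalues j := by
    rw [sum_mul_pairingMatrix, ← eq_sum_smul_vecMulVec_star hv fun i => by
      rw [hA.isHermitian.mulVec_eigenvectorBasis, Complex.coe_smul], trace_mul_vecMulVec,
      hSA.isHermitian.mulVec_eigenvectorBasis, ← Complex.coe_smul, dotProduct_smul, hw,
      if_pos rfl, smul_eq_mul, mul_one]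
  set I := univ.filter fun i => hA.isHermitian.eigenvalues i ≠ 0
  set J := univ.filter fun j => hSA.isHermitian.eigenvalues j ≠ 0
  have hIJ : ∀ i ∈ I, ∀ j ∉ J, B i j = 0 := by
    intro i hi j hj
    simp only [I, J, mem_filter, mem_univ, true_and, not_not] at hi hj
    have hterm := (sum_eq_zero_iff_of_nonneg fun i _ => mul_nonneg
      (Complex.zero_le_real.2 (hA.eigenvalues_nonneg i)) (hB i j)).1
      (by rw [hsum j, hj, Complex.ofReal_zero]) i (mem_univ i)
    exact (mul_eq_zero.1 hterm).resolve_left (by exact_mod_cast hi)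
  rw [hA.isHermitian.rank_eq_card_non_zero_eigs, hSA.isHermitian.rank_eq_card_non_zero_eigs,
    Fintype.card_subtype, Fintype.card_subtype]
  exact mul_le_mul_of_nsmul_sqrt_div_le (card_le_univ I |>.trans_eq (Fintype.card_fin k))
    (card_nsmul_le_card_nsmul_of_sum_eq hB (hS.sum_pairingMatrix_row hv hw)
      (hS.sum_pairingMatrix_col hv hw) hIJ)

end IsDoublyStochasticMap

/-- Every doubly stochastic positive map has total support; consequently
`rank(A)·m ≤ rank(S(A))·k` for every positive semidefinite `A`. -/
theorem doublyStochastic_totalSupport {k m : ℕ}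
    (S : Matrix (Fin k) (Fin k) ℂ →ₗ[ℂ] Matrix (Fin m) (Fin m) ℂ)
    (hSpos : ∀ A : Matrix (Fin k) (Fin k) ℂ, A.PosSemidef → (S A).PosSemidef)
    (hDS : IsDoublyStochasticMap (fun X => S X)) :
    MapTotalSupport (fun X => S X) ∧
      ∀ A : Matrix (Fin k) (Fin k) ℂ, A.PosSemidef →
        A.rank * m ≤ (S A).rank * k :=
  ⟨hDS.mapTotalSupport hSpos, fun _ hA => hDS.rank_mul_le hSpos hA⟩
end

section
/- Let T : M_k → M_m be a positive map such that T(Id) and T*(Id) are positive definite, and suppose there are orthogonal projections V_i ∈ M_k, W_i ∈ M_m (1 ≤ i ≤ s) with V_iV_j = 0 and W_iW_j = 0 for i ≠ j, Id = Σ V_i, Id = Σ W_i, and T(V_i M_k V_i) ⊆ W_i M_m W_i for all i. Then the scaling matrices X_n ∈ M_k and Y_n ∈ M_m produced by the Sinkhorn-type scaling algorithm commute with every V_i and W_i respectively: X_n V_i = V_i X_n and Y_n W_i = W_i Y_n for all i and n. -/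
open Matrix BigOperators
open scoped ComplexOrder

/-- `S` is the inverse square root `P^{-1/2}` of a positive definite matrix `P`:
`S` is positive definite and `S · S = P⁻¹`. -/
def IsInvSqrt {n : ℕ} (P S : Matrix (Fin n) (Fin n) ℂ) : Prop :=
  S.PosDef ∧ S * S = P⁻¹

/-
The projections `V i`, `W i` split `T` into blocks: `T` sends the corner `V i M_k V i` into
`W i M_m W i`, so it maps the commutant of `{V i}` into the commutant of `{W i}`. Positivity
transfers this to the adjoint on positive semidefinite matrices: `Z = T*(W i Q W i)` is positive
semidefinite and `tr (V j Z) = tr (T (V j) W i Q W i) = 0` for `j ≠ i`, which forces `Z V j = 0`,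
so `Z` lives in the corner of `V i`. Since commuting with a positive definite matrix passes to its
inverse square root, every step of the scaling algorithm preserves the commutation relations.
-/

section Corners

variable {A ι : Type*} [Semiring A] {p : ι → A}

theorem eq_sum_mul_mul_of_commute [Fintype ι] (hsum : ∑ i, p i = 1)
    (hp : ∀ i, IsIdempotentElem (p i)) {a : A} (ha : ∀ i, Commute a (p i)) :
    a = ∑ i, p i * a * p i :=
  calc a = (∑ i, p i) * a := by rw [hsum, one_mul]
    _ = ∑ i, p i * a * p i := by
      rw [Finset.sum_mul]
      refine Finset.sum_congr rfl fun i _ => ?_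
      rw [mul_assoc, (ha i).eq, ← mul_assoc, (hp i).eq]

theorem commute_corner (hp : ∀ i, IsIdempotentElem (p i))
    (horth : ∀ i j, i ≠ j → p i * p j = 0) (a : A) (i j : ι) :
    Commute (p i * a * p i) (p j) := by
  rcases eq_or_ne i j with rfl | hij
  · change p i * a * p i * p i = p i * (p i * a * p i)
    rw [mul_assoc _ (p i), (hp i).eq, ← mul_assoc, ← mul_assoc, (hp i).eq]
  · change p i * a * p i * p j = p j * (p i * a * p i)
    rw [mul_assoc _ (p i), horth i j hij, ← mul_assoc, ← mul_assoc, horth j i hij.symm,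
      mul_zero, zero_mul, zero_mul]

theorem commute_map_of_commute [Fintype ι] {B F : Type*} [Semiring B] [FunLike F A B]
    [AddMonoidHomClass F A B] (T : F) {q : ι → B} (hsum : ∑ i, p i = 1)
    (hp : ∀ i, IsIdempotentElem (p i)) (hq : ∀ i, IsIdempotentElem (q i))
    (hq_orth : ∀ i j, i ≠ j → q i * q j = 0)
    (hT : ∀ i a, T (p i * a * p i) = q i * T (p i * a * p i) * q i)
    {a : A} (ha : ∀ i, Commute a (p i)) (j : ι) : Commute (T a) (q j) := by
  rw [eq_sum_mul_mul_of_commute hsum hp ha, map_sum]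
  refine Commute.sum_left _ _ _ fun i _ => ?_
  rw [hT i a]
  exact commute_corner hq hq_orth _ i j

end Corners

theorem Commute.conjTranspose_left {n α : Type*} [Fintype n] [Semiring α] [StarRing α]
    {X V : Matrix n n α} (h : Commute X V) (hV : V.IsHermitian) : Commute Xᴴ V := by
  simpa only [star_eq_conjTranspose, hV.eq] using h.star_star

theorem Commute.conjTranspose_mul_mul_same {n α : Type*} [Fintype n] [Semiring α] [StarRing α]
    {X M V : Matrix n n α} (hX : Commute X V) (hV : V.IsHermitian) (hM : Commute M V) :
    Commute (Xᴴ * M * X) V :=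
  ((hX.conjTranspose_left hV).mul_left hM).mul_left hX

theorem Commute.mul_mul_conjTranspose_same {n α : Type*} [Fintype n] [Semiring α] [StarRing α]
    {X M V : Matrix n n α} (hX : Commute X V) (hV : V.IsHermitian) (hM : Commute M V) :
    Commute (X * M * Xᴴ) V :=
  (hX.mul_left hM).mul_left (hX.conjTranspose_left hV)

namespace Matrix

variable {n : Type*} [Fintype n] [DecidableEq n]

theorem commute_nonsing_inv_left {α : Type*} [CommRing α] {P C : Matrix n n α}
    (h : Commute P C) : Commute P⁻¹ C := by
  by_cases hP : IsUnit P.det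
  · exact Commute.units_inv_left (u := P.nonsingInvUnit hP) h
  · rw [nonsing_inv_apply_not_isUnit _ hP]
    exact Commute.zero_left C

variable {𝕜 : Type*} [RCLike 𝕜]

open scoped MatrixOrder in
theorem PosSemidef.commute_of_commute_mul_self {S C : Matrix n n 𝕜} (hS : S.PosSemidef)
    (h : Commute (S * S) C) : Commute S C := by
  rw [← CFC.sqrt_mul_self S hS.nonneg]
  exact h.cfcₙ_nnreal _

open scoped MatrixOrder in
theorem PosSemidef.exists_eq_conjTranspose_mul_self {Z : Matrix n n 𝕜} (hZ : Z.PosSemidef) :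
    ∃ C : Matrix n n 𝕜, Z = Cᴴ * C :=
  CStarAlgebra.nonneg_iff_eq_star_mul_self.mp hZ.nonneg

theorem PosSemidef.trace_mul_nonneg {P N : Matrix n n 𝕜} (hP : P.PosSemidef)
    (hN : N.PosSemidef) : 0 ≤ (P * N).trace := by
  obtain ⟨C, rfl⟩ := hN.exists_eq_conjTranspose_mul_self
  rw [← mul_assoc, trace_mul_cycle]
  exact (hP.mul_mul_conjTranspose_same C).trace_nonneg

theorem PosSemidef.mul_eq_zero_of_trace_eq_zero {l : Type*} [Fintype l] {Z : Matrix n n 𝕜}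
    (hZ : Z.PosSemidef) {P : Matrix n l 𝕜} (h : (Pᴴ * Z * P).trace = 0) : Z * P = 0 := by
  obtain ⟨C, rfl⟩ := hZ.exists_eq_conjTranspose_mul_self
  have hCP : C * P = 0 := trace_conjTranspose_mul_self_eq_zero_iff.mp <| by
    simpa only [conjTranspose_mul, Matrix.mul_assoc] using h
  rw [Matrix.mul_assoc, hCP, Matrix.mul_zero]

theorem posSemidef_of_forall_dotProduct_mulVec_nonneg {A : Matrix n n ℂ}
    (h : ∀ x, 0 ≤ star x ⬝ᵥ (A *ᵥ x)) : A.PosSemidef := by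
  rw [← isPositive_toEuclideanLin_iff, LinearMap.isPositive_iff_complex]
  intro x
  have hx := h x.ofLp
  have hself := (IsSelfAdjoint.of_nonneg hx).star_eq
  rw [EuclideanSpace.inner_eq_star_dotProduct, toLpLin_apply, dotProduct_comm, star_dotProduct,
    hself]
  exact ⟨RCLike.conj_eq_iff_re.mp hself, (RCLike.nonneg_iff.mp hx).1⟩

end Matrix

theorem IsInvSqrt.commute {n : ℕ} {P S C : Matrix (Fin n) (Fin n) ℂ} (hS : IsInvSqrt P S)
    (h : Commute P C) : Commute S C :=
  hS.1.posSemidef.commute_of_commute_mul_self (hS.2 ▸ commute_nonsing_inv_left h)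

section Adjoint

variable {k m ι : Type*} [Fintype k] [DecidableEq k] [Fintype m] [DecidableEq m] [Fintype ι]
  {T : Matrix k k ℂ →ₗ[ℂ] Matrix m m ℂ} {Tstar : Matrix m m ℂ →ₗ[ℂ] Matrix k k ℂ}

theorem Matrix.PosSemidef.adjoint_apply
    (hadj : ∀ X Y, ((T X) * Yᴴ).trace = (X * (Tstar Y)ᴴ).trace)
    (hTpos : ∀ A : Matrix k k ℂ, A.PosSemidef → (T A).PosSemidef)
    {N : Matrix m m ℂ} (hN : N.PosSemidef) : (Tstar N).PosSemidef := by
  rw [← posSemidef_conjTranspose_iff]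
  refine posSemidef_of_forall_dotProduct_mulVec_nonneg fun v => ?_
  have hquad : star v ⬝ᵥ ((Tstar N)ᴴ *ᵥ v) = (T (vecMulVec v (star v)) * N).trace := by
    rw [← hN.isHermitian.eq, hadj, trace_mul_comm, mul_vecMulVec, trace_vecMulVec,
      dotProduct_comm, hN.isHermitian.eq]
  rw [hquad]
  exact (hTpos _ (posSemidef_vecMulVec_self_star v)).trace_mul_nonneg hN

theorem commute_adjoint_apply_of_mul_eq_zero
    (hadj : ∀ X Y, ((T X) * Yᴴ).trace = (X * (Tstar Y)ᴴ).trace)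
    (hTpos : ∀ A : Matrix k k ℂ, A.PosSemidef → (T A).PosSemidef)
    {V : ι → Matrix k k ℂ} {W : ι → Matrix m m ℂ} (hV : ∀ i, (V i).IsHermitian)
    (hV_idem : ∀ i, IsIdempotentElem (V i)) (hVsum : ∑ i, V i = 1)
    (hTV : ∀ j, T (V j) = W j * T (V j) * W j)
    {N : Matrix m m ℂ} (hN : N.PosSemidef) {i : ι} (hNW : ∀ j, j ≠ i → W j * N = 0) (j : ι) :
    Commute (Tstar N) (V j) := by
  set Z := Tstar N
  have hZ : Z.PosSemidef := hN.adjoint_apply hadj hTpos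
  have hZV : ∀ j, j ≠ i → Z * V j = 0 := fun j hj => hZ.mul_eq_zero_of_trace_eq_zero <| by
    rw [(hV j).eq, trace_mul_cycle, (hV_idem j).eq, ← hZ.isHermitian.eq, ← hadj,
      hN.isHermitian.eq, hTV j, mul_assoc, hNW j hj, mul_zero, trace_zero]
  have hVZ : ∀ j, j ≠ i → V j * Z = 0 := fun j hj => by
    simpa only [conjTranspose_mul, (hV j).eq, hZ.isHermitian.eq, conjTranspose_zero]
      using congrArg conjTranspose (hZV j hj)
  have hZ_right : Z * V i = Z := by
    rw [← Finset.sum_eq_single_of_mem i (Finset.mem_univ i) (fun j _ hj => hZV j hj),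
      ← Finset.mul_sum, hVsum, mul_one]
  have hV_left : V i * Z = Z := by
    rw [← Finset.sum_eq_single_of_mem i (Finset.mem_univ i) (fun j _ hj => hVZ j hj),
      ← Finset.sum_mul, hVsum, one_mul]
  rcases eq_or_ne j i with rfl | hj
  · exact hZ_right.trans hV_left.symm
  · exact (hZV j hj).trans (hVZ j hj).symm

theorem commute_adjoint_apply_of_commute
    (hadj : ∀ X Y, ((T X) * Yᴴ).trace = (X * (Tstar Y)ᴴ).trace)
    (hTpos : ∀ A : Matrix k k ℂ, A.PosSemidef → (T A).PosSemidef)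
    {V : ι → Matrix k k ℂ} {W : ι → Matrix m m ℂ}
    (hV : ∀ i, (V i).IsHermitian) (hV_idem : ∀ i, IsIdempotentElem (V i)) (hVsum : ∑ i, V i = 1)
    (hW : ∀ i, (W i).IsHermitian) (hW_idem : ∀ i, IsIdempotentElem (W i))
    (hWorth : ∀ i j, i ≠ j → W i * W j = 0) (hWsum : ∑ i, W i = 1)
    (hTV : ∀ j, T (V j) = W j * T (V j) * W j)
    {Q : Matrix m m ℂ} (hQ : Q.PosSemidef) (hQW : ∀ i, Commute Q (W i)) (j : ι) :
    Commute (Tstar Q) (V j) := by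
  rw [eq_sum_mul_mul_of_commute hWsum hW_idem hQW, map_sum]
  refine Commute.sum_left _ _ _ fun i _ => ?_
  refine commute_adjoint_apply_of_mul_eq_zero hadj hTpos hV hV_idem hVsum hTV ?_ (i := i) ?_ j
  · simpa only [(hW i).eq] using hQ.conjTranspose_mul_mul_same (W i)
  · intro j' hj'
    rw [← mul_assoc, ← mul_assoc, hWorth j' i hj', zero_mul, zero_mul]

end Adjoint

theorem scaling_commutes_general {k m : ℕ}
    (T : Matrix (Fin k) (Fin k) ℂ →ₗ[ℂ] Matrix (Fin m) (Fin m) ℂ)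
    (Tstar : Matrix (Fin m) (Fin m) ℂ →ₗ[ℂ] Matrix (Fin k) (Fin k) ℂ)
    (hadj : ∀ X Y, ((T X) * Yᴴ).trace = (X * (Tstar Y)ᴴ).trace)
    (hTpos : ∀ A : Matrix (Fin k) (Fin k) ℂ, A.PosSemidef → (T A).PosSemidef)
    (X : ℕ → Matrix (Fin k) (Fin k) ℂ) (Y : ℕ → Matrix (Fin m) (Fin m) ℂ)
    (A : ℕ → Matrix (Fin k) (Fin k) ℂ) (B : ℕ → Matrix (Fin m) (Fin m) ℂ)
    (SA : ℕ → Matrix (Fin k) (Fin k) ℂ) (SB : ℕ → Matrix (Fin m) (Fin m) ℂ)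
    (S0 : Matrix (Fin m) (Fin m) ℂ)
    (hX0 : X 0 = 1)
    (hS0 : IsInvSqrt (T ((Real.sqrt k : ℂ)⁻¹ • 1)) S0)
    (hY0 : Y 0 = (Real.sqrt (Real.sqrt m) : ℂ)⁻¹ • S0)
    (hA : ∀ n, A n = (X n)ᴴ * Tstar ((Real.sqrt m : ℂ)⁻¹ • ((Y n)ᴴ * Y n)) * X n)
    (hSA : ∀ n, IsInvSqrt (A n) (SA n))
    (hXs : ∀ n, X (n + 1) = (Real.sqrt (Real.sqrt k) : ℂ)⁻¹ • (X n * SA n))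
    (hB : ∀ n, B n = Y n * T ((Real.sqrt k : ℂ)⁻¹ • (X (n + 1) * (X (n + 1))ᴴ)) * (Y n)ᴴ)
    (hSB : ∀ n, IsInvSqrt (B n) (SB n))
    (hYs : ∀ n, Y (n + 1) = (Real.sqrt (Real.sqrt m) : ℂ)⁻¹ • (SB n * Y n))
    {s : ℕ} (V : Fin s → Matrix (Fin k) (Fin k) ℂ)
    (W : Fin s → Matrix (Fin m) (Fin m) ℂ)
    (hVproj : ∀ i, (V i).IsHermitian ∧ V i * V i = V i)
    (hWproj : ∀ i, (W i).IsHermitian ∧ W i * W i = W i)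
    (hWorth : ∀ i j, i ≠ j → W i * W j = 0)
    (hVsum : ∑ i, V i = 1) (hWsum : ∑ i, W i = 1)
    (hTV : ∀ i M, T (V i * M * V i) = W i * T (V i * M * V i) * W i) :
    ∀ n i, X n * V i = V i * X n ∧ Y n * W i = W i * Y n := by
  have hT : ∀ P, (∀ i, Commute P (V i)) → ∀ i, Commute (T P) (W i) := fun P hP =>
    commute_map_of_commute T hVsum (fun i => (hVproj i).2) (fun i => (hWproj i).2) hWorth hTV hP
  have hTstar : ∀ Q, Q.PosSemidef → (∀ i, Commute Q (W i)) → ∀ i, Commute (Tstar Q) (V i) :=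
    fun Q hQ hQW => commute_adjoint_apply_of_commute hadj hTpos (fun i => (hVproj i).1)
      (fun i => (hVproj i).2) hVsum (fun i => (hWproj i).1) (fun i => (hWproj i).2) hWorth hWsum
      (fun j => by simpa only [mul_one, (hVproj j).2] using hTV j 1) hQ hQW
  suffices h : ∀ n, (∀ i, Commute (X n) (V i)) ∧ ∀ i, Commute (Y n) (W i) from
    fun n i => ⟨(h n).1 i, (h n).2 i⟩
  intro n
  induction n with
  | zero =>
    refine ⟨fun i => hX0 ▸ Commute.one_left _, fun i => hY0 ▸ (hS0.commute ?_).smul_left _⟩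
    rw [map_smul]
    exact (hT 1 (fun i => Commute.one_left _) i).smul_left _
  | succ n ih =>
    obtain ⟨hX, hY⟩ := ih
    have hA_comm : ∀ i, Commute (A n) (V i) := fun i => by
      rw [hA n, map_smul]
      refine (hX i).conjTranspose_mul_mul_same (hVproj i).1 (Commute.smul_left ?_ _)
      exact hTstar _ (posSemidef_conjTranspose_mul_self _)
        (fun i => ((hY i).conjTranspose_left (hWproj i).1).mul_left (hY i)) i
    have hX' : ∀ i, Commute (X (n + 1)) (V i) := fun i => by
      rw [hXs n]
      exact ((hX i).mul_left ((hSA n).commute (hA_comm i))).smul_left _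
    have hB_comm : ∀ i, Commute (B n) (W i) := fun i => by
      rw [hB n, map_smul]
      refine (hY i).mul_mul_conjTranspose_same (hWproj i).1 (Commute.smul_left ?_ _)
      exact hT _ (fun i => (hX' i).mul_left ((hX' i).conjTranspose_left (hVproj i).1)) i
    refine ⟨hX', fun i => ?_⟩
    rw [hYs n]
    exact (((hSB n).commute (hB_comm i)).mul_left (hY i)).smul_left _

/-- Lemma on commutation: the Sinkhorn scaling matrices `X_n`, `Y_n` commute with the
orthogonal projections `V_i`, `W_i` of an invariant block decomposition. -/
theorem scaling_commutes {k m : ℕ}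
    (T : Matrix (Fin k) (Fin k) ℂ →ₗ[ℂ] Matrix (Fin m) (Fin m) ℂ)
    (Tstar : Matrix (Fin m) (Fin m) ℂ →ₗ[ℂ] Matrix (Fin k) (Fin k) ℂ)
    (hadj : ∀ X Y, ((T X) * Yᴴ).trace = (X * (Tstar Y)ᴴ).trace)
    (hTpos : ∀ A : Matrix (Fin k) (Fin k) ℂ, A.PosSemidef → (T A).PosSemidef)
    (hT1 : (T 1).PosDef) (hTs1 : (Tstar 1).PosDef)
    (X : ℕ → Matrix (Fin k) (Fin k) ℂ) (Y : ℕ → Matrix (Fin m) (Fin m) ℂ)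
    (A : ℕ → Matrix (Fin k) (Fin k) ℂ) (B : ℕ → Matrix (Fin m) (Fin m) ℂ)
    (SA : ℕ → Matrix (Fin k) (Fin k) ℂ) (SB : ℕ → Matrix (Fin m) (Fin m) ℂ)
    (S0 : Matrix (Fin m) (Fin m) ℂ)
    (hX0 : X 0 = 1)
    (hS0 : IsInvSqrt (T ((Real.sqrt k : ℂ)⁻¹ • 1)) S0)
    (hY0 : Y 0 = (Real.sqrt (Real.sqrt m) : ℂ)⁻¹ • S0)
    (hA : ∀ n, A n = (X n)ᴴ * Tstar ((Real.sqrt m : ℂ)⁻¹ • ((Y n)ᴴ * Y n)) * X n)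
    (hSA : ∀ n, IsInvSqrt (A n) (SA n))
    (hXs : ∀ n, X (n + 1) = (Real.sqrt (Real.sqrt k) : ℂ)⁻¹ • (X n * SA n))
    (hB : ∀ n, B n = Y n * T ((Real.sqrt k : ℂ)⁻¹ • (X (n + 1) * (X (n + 1))ᴴ)) * (Y n)ᴴ)
    (hSB : ∀ n, IsInvSqrt (B n) (SB n))
    (hYs : ∀ n, Y (n + 1) = (Real.sqrt (Real.sqrt m) : ℂ)⁻¹ • (SB n * Y n))
    {s : ℕ} (V : Fin s → Matrix (Fin k) (Fin k) ℂ)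
    (W : Fin s → Matrix (Fin m) (Fin m) ℂ)
    (hVproj : ∀ i, (V i).IsHermitian ∧ V i * V i = V i)
    (hWproj : ∀ i, (W i).IsHermitian ∧ W i * W i = W i)
    (hVorth : ∀ i j, i ≠ j → V i * V j = 0)
    (hWorth : ∀ i j, i ≠ j → W i * W j = 0)
    (hVsum : ∑ i, V i = 1) (hWsum : ∑ i, W i = 1)
    (hTV : ∀ i M, T (V i * M * V i) = W i * T (V i * M * V i) * W i) :
    ∀ n i, X n * V i = V i * X n ∧ Y n * W i = W i * Y n :=
  scaling_commutes_general T Tstar hadj hTpos X Y A B SA SB S0 hX0 hS0 hY0 hA hSA hXs hB hSB hYs V W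
    hVproj hWproj hWorth hVsum hWsum hTV
end

section
/- In the Sinkhorn-type scaling algorithm for a positive map T : M_k → M_m with T(Id), T*(Id) positive definite, for every n > 0 one has Y_n T(X_n (Id/√k) X_n*) Y_n* = Id/√m and X_{n+1}* T*(Y_n* (Id/√m) Y_n) X_{n+1} = Id/√k; moreover tr(A_n) = √k and tr(B_n) = √m for every n > 0, and the sequence det(X_n ⊗ Y_n) is positive and non-decreasing in n. -/
/-!
Write `Cₙ = Xₙ* T*(Yₙ* Yₙ/√m) Xₙ` and `Rₙ = Yₙ T(Xₙ Xₙ*/√k) Yₙ*` (`colMarginal`, `rowMarginal`),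
so that `Aₙ = Cₙ` and `Bₙ` is `R` evaluated at `(Xₙ₊₁, Yₙ)`. The update `Xₙ₊₁ = Xₙ S` with
`S = (√k Aₙ)^{-1/2}` turns the column marginal into `S Aₙ S = Id/√k`, and symmetrically the update
of `Y` makes the row marginal `Id/√m` (for `n = 0` this is the choice of `Y₀`). The adjoint relation
`tr(T(P) Q) = conj tr(T*(Q) P)` for Hermitian `P, Q` turns the normalization of one marginal into
the trace of the other: `tr Aₙ = √k · conj tr(T(Pₙ) Qₙ) = √k`, and likewise `tr Bₙ = √m`. Hence
`√k Aₙ` has trace `k`, so AM-GM on its eigenvalues gives `det(√k Aₙ) ≤ 1`, and the factor `S` by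
which `Xₙ` is multiplied has determinant `≥ 1`. The same holds for `Yₙ`, and
`det(Xₙ ⊗ Yₙ) = det(Xₙ)^m det(Yₙ)^k`.
-/

open Matrix BigOperators
open scoped ComplexOrder

open Kronecker

theorem Real.prod_le_sum_div_card_pow {ι : Type*} (s : Finset ι) (z : ι → ℝ)
    (hz : ∀ i ∈ s, 0 ≤ z i) : ∏ i ∈ s, z i ≤ ((∑ i ∈ s, z i) / s.card) ^ s.card := by
  rcases s.eq_empty_or_nonempty with rfl | hs
  · simp
  have hcard : (0 : ℝ) < s.card := by exact_mod_cast hs.card_pos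
  have amgm := Real.geom_mean_le_arith_mean s (fun _ => 1) z (fun _ _ => zero_le_one)
    (by simpa using hcard) hz
  simp only [Real.rpow_one, one_mul, Finset.sum_const, nsmul_eq_mul, mul_one] at amgm
  calc ∏ i ∈ s, z i = ((∏ i ∈ s, z i) ^ (s.card : ℝ)⁻¹) ^ s.card := by
        rw [← Real.rpow_natCast, ← Real.rpow_mul (Finset.prod_nonneg hz),
          inv_mul_cancel₀ hcard.ne', Real.rpow_one]
    _ ≤ ((∑ i ∈ s, z i) / s.card) ^ s.card :=
        pow_le_pow_left₀ (Real.rpow_nonneg (Finset.prod_nonneg hz) _) amgm _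

theorem Complex.ofReal_sqrt_natCast_ne_zero {n : ℕ} (hn : 0 < n) : (Real.sqrt n : ℂ) ≠ 0 :=
  Complex.ofReal_ne_zero.mpr (Real.sqrt_pos.mpr (Nat.cast_pos.mpr hn)).ne'

theorem Complex.inv_ofReal_sqrt_mul_self {r : ℝ} (hr : 0 ≤ r) :
    (Real.sqrt r : ℂ)⁻¹ * (Real.sqrt r : ℂ)⁻¹ = (r : ℂ)⁻¹ := by
  rw [← mul_inv, ← Complex.ofReal_mul, Real.mul_self_sqrt hr]

theorem pos_and_le_succ_of_eq_mul {α : Type*} [CommSemiring α] [PartialOrder α]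
    [IsStrictOrderedRing α] {d r : ℕ → α} (h0 : 0 < d 0) (hd : ∀ i, d (i + 1) = d i * r i)
    (hr : ∀ i, 1 ≤ r i) (i : ℕ) : 0 < d i ∧ d i ≤ d (i + 1) := by
  have hpos : ∀ i, 0 < d i := by
    intro i
    induction i with
    | zero => exact h0
    | succ i ih => rw [hd]; exact mul_pos ih (zero_lt_one.trans_le (hr i))
  exact ⟨hpos i, hd i ▸ le_mul_of_one_le_right (hpos i).le (hr i)⟩

theorem Matrix.PosSemidef.det_le_trace_div_card_pow {𝕜 n : Type*} [RCLike 𝕜] [Fintype n]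
    [DecidableEq n] {P : Matrix n n 𝕜} (hP : P.PosSemidef) :
    P.det ≤ (P.trace / Fintype.card n) ^ Fintype.card n := by
  rw [hP.isHermitian.det_eq_prod_eigenvalues, hP.isHermitian.trace_eq_sum_eigenvalues]
  have := Real.prod_le_sum_div_card_pow Finset.univ _ fun i _ => hP.eigenvalues_nonneg i
  exact_mod_cast (RCLike.ofReal_le_ofReal (K := 𝕜)).mpr this

theorem Matrix.trace_mul_smul_conjTranspose_mul_of_eq {n α : Type*} [Fintype n] [DecidableEq n]
    [CommRing α] [StarRing α] {Z M : Matrix n n α} {c : α} (h : Z * M * Zᴴ = c • 1) (d : α) :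
    (M * (d • (Zᴴ * Z))).trace = d * c * Fintype.card n := by
  rw [Matrix.mul_smul, trace_smul, ← Matrix.mul_assoc, trace_mul_cycle, h, trace_smul,
    trace_one, smul_eq_mul, smul_eq_mul, mul_assoc]

theorem Matrix.IsHermitian.ofReal_inv_smul {ι : Type*} {M : Matrix ι ι ℂ} (hM : M.IsHermitian)
    (r : ℝ) : ((r : ℂ)⁻¹ • M).IsHermitian :=
  hM.smul (by simp [IsSelfAdjoint, Complex.conj_ofReal])

theorem Matrix.det_kronecker_pos_and_le {ι κ : Type*} [Fintype ι] [Fintype κ] [DecidableEq ι]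
    [DecidableEq κ] {X X' : Matrix ι ι ℂ} {Y Y' : Matrix κ κ ℂ} (hX : 0 < X.det)
    (hXX' : X.det ≤ X'.det) (hY : 0 < Y.det) (hYY' : Y.det ≤ Y'.det) :
    0 < (X ⊗ₖ Y).det ∧ (X ⊗ₖ Y).det ≤ (X' ⊗ₖ Y').det := by
  rw [det_kronecker, det_kronecker]
  exact ⟨mul_pos (pow_pos hX _) (pow_pos hY _), mul_le_mul (pow_le_pow_left₀ hX.le hXX' _)
    (pow_le_pow_left₀ hY.le hYY' _) (pow_pos hY _).le (pow_pos (hX.trans_le hXX') _).le⟩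

namespace IsInvSqrt

variable {n : ℕ} {P S : Matrix (Fin n) (Fin n) ℂ}

theorem isUnit_det (h : IsInvSqrt P S) : IsUnit P.det := by
  rw [← isUnit_nonsing_inv_det_iff, ← h.2, det_mul]
  exact (h.1.isUnit.map detMonoidHom).mul (h.1.isUnit.map detMonoidHom)

theorem posDef (h : IsInvSqrt P S) : P.PosDef := by
  refine posDef_inv_iff.mp (h.2 ▸ ?_)
  have hSS : (S * 1 * Sᴴ).PosSemidef := PosSemidef.one.mul_mul_conjTranspose_same S
  rw [Matrix.mul_one, h.1.isHermitian.eq] at hSS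
  exact hSS.posDef_iff_isUnit.mpr (h.1.isUnit.mul h.1.isUnit)

theorem dim_eq_zero (h : IsInvSqrt 0 S) : n = 0 := by
  by_contra hn
  have : NeZero n := ⟨hn⟩
  simpa using h.posDef.det_pos

theorem pos_of_mul_map_mul {k m : ℕ} (L : Matrix (Fin m) (Fin m) ℂ →ₗ[ℂ] Matrix (Fin k) (Fin k) ℂ)
    (hk : 0 < k) {Z₁ Z₂ S : Matrix (Fin k) (Fin k) ℂ} {x : Matrix (Fin m) (Fin m) ℂ}
    (h : IsInvSqrt (Z₁ * L x * Z₂) S) : 0 < m := by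
  refine Nat.pos_of_ne_zero fun hm => hk.ne' ?_
  subst hm
  rw [Subsingleton.elim x 0, map_zero, Matrix.mul_zero, Matrix.zero_mul] at h
  exact h.dim_eq_zero

theorem mul_mul_eq_one (h : IsInvSqrt P S) : S * P * S = 1 := by
  refine mul_eq_one_comm.mp ?_
  rw [← Matrix.mul_assoc, h.2, nonsing_inv_mul _ h.isUnit_det]

theorem mul_mul_eq_inv_smul_one {M : Matrix (Fin n) (Fin n) ℂ} {r : ℂ} (hr : r ≠ 0)
    (h : IsInvSqrt (r • M) S) : S * M * S = r⁻¹ • 1 := by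
  rw [← h.mul_mul_eq_one, Matrix.mul_smul, Matrix.smul_mul, smul_smul, inv_mul_cancel₀ hr,
    one_smul]

theorem smul (h : IsInvSqrt P S) {r : ℝ} (hr : 0 < r) :
    IsInvSqrt ((r : ℂ) • P) ((Real.sqrt r : ℂ)⁻¹ • S) := by
  have hsqrt : (0 : ℂ) < (Real.sqrt r : ℂ)⁻¹ := by
    have := Real.sqrt_pos.mpr hr
    positivity
  refine ⟨h.1.smul hsqrt, (inv_eq_left_inv ?_).symm⟩
  simp only [Matrix.smul_mul, Matrix.mul_smul, smul_smul]
  rw [h.2, nonsing_inv_mul _ h.isUnit_det, ← mul_inv, ← Complex.ofReal_mul,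
    Real.mul_self_sqrt hr.le, mul_inv_cancel₀ (by exact_mod_cast hr.ne'), one_smul]

theorem one_le_det (h : IsInvSqrt P S) (hP : P.det ≤ 1) : 1 ≤ S.det := by
  obtain ⟨s, hs, hsS⟩ := RCLike.pos_iff_exists_ofReal.mp h.1.det_pos
  obtain ⟨p, hp, hpP⟩ := RCLike.pos_iff_exists_ofReal.mp h.posDef.det_pos
  have hprod : s * p * s = 1 := by
    have := congrArg det h.mul_mul_eq_one
    rw [det_mul, det_mul, det_one, ← hsS, ← hpP, ← RCLike.ofReal_mul, ← RCLike.ofReal_mul,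
      ← RCLike.ofReal_one] at this
    exact RCLike.ofReal_injective this
  have hp1 : p ≤ 1 := by
    rw [← hpP, ← RCLike.ofReal_one] at hP
    exact RCLike.ofReal_le_ofReal.mp hP
  have hs1 : 1 ≤ s := by nlinarith [mul_pos hs hs, mul_le_mul_of_nonneg_left hp1 (mul_pos hs hs).le]
  rw [← hsS, ← RCLike.ofReal_one]
  exact RCLike.ofReal_le_ofReal.mpr hs1

theorem one_le_det_of_trace_eq (h : IsInvSqrt P S) (htr : P.trace = n) : 1 ≤ S.det := by
  refine h.one_le_det ((h.posDef.posSemidef.det_le_trace_div_card_pow).trans ?_)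
  rcases Nat.eq_zero_or_pos n with rfl | hn
  · simp
  rw [htr, Fintype.card_fin, div_self (by exact_mod_cast hn.ne'), one_pow]

theorem one_le_det_inv_sqrt_sqrt_smul (hn : 0 < n) (h : IsInvSqrt P S)
    (htr : P.trace = Real.sqrt n) : 1 ≤ ((Real.sqrt (Real.sqrt n) : ℂ)⁻¹ • S).det := by
  refine (h.smul (Real.sqrt_pos.mpr (Nat.cast_pos.mpr hn))).one_le_det_of_trace_eq ?_
  rw [trace_smul, htr, smul_eq_mul, ← Complex.ofReal_mul, Real.mul_self_sqrt (Nat.cast_nonneg n),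
    Complex.ofReal_natCast]

end IsInvSqrt

section Scaling

variable {k m : ℕ}

theorem trace_adjoint_mul_eq_star {T : Matrix (Fin k) (Fin k) ℂ →ₗ[ℂ] Matrix (Fin m) (Fin m) ℂ}
    {Tstar : Matrix (Fin m) (Fin m) ℂ →ₗ[ℂ] Matrix (Fin k) (Fin k) ℂ}
    (hadj : ∀ X Y, ((T X) * Yᴴ).trace = (X * (Tstar Y)ᴴ).trace)
    {P : Matrix (Fin k) (Fin k) ℂ} {Q : Matrix (Fin m) (Fin m) ℂ} (hP : P.IsHermitian)
    (hQ : Q.IsHermitian) : (Tstar Q * P).trace = star (T P * Q).trace := by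
  calc (Tstar Q * P).trace = star (P * (Tstar Q)ᴴ).trace := by
        rw [← trace_conjTranspose, conjTranspose_mul, conjTranspose_conjTranspose, hP.eq]
    _ = star (T P * Q).trace := by rw [← hadj, hQ.eq]

noncomputable def rowMarginal (T : Matrix (Fin k) (Fin k) ℂ →ₗ[ℂ] Matrix (Fin m) (Fin m) ℂ)
    (X : Matrix (Fin k) (Fin k) ℂ) (Y : Matrix (Fin m) (Fin m) ℂ) : Matrix (Fin m) (Fin m) ℂ :=
  Y * T ((Real.sqrt k : ℂ)⁻¹ • (X * Xᴴ)) * Yᴴ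

noncomputable def colMarginal (Tstar : Matrix (Fin m) (Fin m) ℂ →ₗ[ℂ] Matrix (Fin k) (Fin k) ℂ)
    (X : Matrix (Fin k) (Fin k) ℂ) (Y : Matrix (Fin m) (Fin m) ℂ) : Matrix (Fin k) (Fin k) ℂ :=
  Xᴴ * Tstar ((Real.sqrt m : ℂ)⁻¹ • (Yᴴ * Y)) * X

variable (T : Matrix (Fin k) (Fin k) ℂ →ₗ[ℂ] Matrix (Fin m) (Fin m) ℂ)
  (Tstar : Matrix (Fin m) (Fin m) ℂ →ₗ[ℂ] Matrix (Fin k) (Fin k) ℂ)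

theorem trace_colMarginal_of_rowMarginal_eq
    (hadj : ∀ X Y, ((T X) * Yᴴ).trace = (X * (Tstar Y)ᴴ).trace) (hk : 0 < k) (hm : 0 < m)
    {X : Matrix (Fin k) (Fin k) ℂ} {Y : Matrix (Fin m) (Fin m) ℂ}
    (h : rowMarginal T X Y = (Real.sqrt m : ℂ)⁻¹ • 1) :
    (colMarginal Tstar X Y).trace = Real.sqrt k := by
  have hP := (isHermitian_mul_conjTranspose_self X).ofReal_inv_smul (Real.sqrt k)
  have hQ := (isHermitian_conjTranspose_mul_self Y).ofReal_inv_smul (Real.sqrt m)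
  calc (colMarginal Tstar X Y).trace
      = Real.sqrt k * (Tstar ((Real.sqrt m : ℂ)⁻¹ • (Yᴴ * Y)) *
          ((Real.sqrt k : ℂ)⁻¹ • (X * Xᴴ))).trace := by
        rw [Matrix.mul_smul, trace_smul, smul_eq_mul, ← mul_assoc,
          mul_inv_cancel₀ (Complex.ofReal_sqrt_natCast_ne_zero hk), one_mul,
          colMarginal, trace_mul_cycle, trace_mul_comm]
    _ = Real.sqrt k * star (T ((Real.sqrt k : ℂ)⁻¹ • (X * Xᴴ)) *
          ((Real.sqrt m : ℂ)⁻¹ • (Yᴴ * Y))).trace := by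
        rw [trace_adjoint_mul_eq_star hadj hP hQ]
    _ = Real.sqrt k * star ((Real.sqrt m : ℂ)⁻¹ * (Real.sqrt m : ℂ)⁻¹ * m) := by
        rw [trace_mul_smul_conjTranspose_mul_of_eq h, Fintype.card_fin]
    _ = Real.sqrt k := by
        rw [Complex.inv_ofReal_sqrt_mul_self (Nat.cast_nonneg m), Complex.ofReal_natCast,
          inv_mul_cancel₀ (by exact_mod_cast hm.ne'), star_one, mul_one]

theorem trace_rowMarginal_of_colMarginal_eq
    (hadj : ∀ X Y, ((T X) * Yᴴ).trace = (X * (Tstar Y)ᴴ).trace) (hk : 0 < k) (hm : 0 < m)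
    {X : Matrix (Fin k) (Fin k) ℂ} {Y : Matrix (Fin m) (Fin m) ℂ}
    (h : colMarginal Tstar X Y = (Real.sqrt k : ℂ)⁻¹ • 1) :
    (rowMarginal T X Y).trace = Real.sqrt m := by
  have hP := (isHermitian_mul_conjTranspose_self X).ofReal_inv_smul (Real.sqrt k)
  have hQ := (isHermitian_conjTranspose_mul_self Y).ofReal_inv_smul (Real.sqrt m)
  have hcol := trace_mul_smul_conjTranspose_mul_of_eq (Z := Xᴴ)
    (by rwa [conjTranspose_conjTranspose]) (Real.sqrt k : ℂ)⁻¹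
  rw [conjTranspose_conjTranspose] at hcol
  calc (rowMarginal T X Y).trace
      = Real.sqrt m * (T ((Real.sqrt k : ℂ)⁻¹ • (X * Xᴴ)) *
          ((Real.sqrt m : ℂ)⁻¹ • (Yᴴ * Y))).trace := by
        rw [Matrix.mul_smul, trace_smul, smul_eq_mul, ← mul_assoc,
          mul_inv_cancel₀ (Complex.ofReal_sqrt_natCast_ne_zero hm), one_mul,
          rowMarginal, trace_mul_cycle, trace_mul_comm]
    _ = Real.sqrt m * star (Tstar ((Real.sqrt m : ℂ)⁻¹ • (Yᴴ * Y)) *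
          ((Real.sqrt k : ℂ)⁻¹ • (X * Xᴴ))).trace := by
        rw [trace_adjoint_mul_eq_star hadj hP hQ, star_star]
    _ = Real.sqrt m * star ((Real.sqrt k : ℂ)⁻¹ * (Real.sqrt k : ℂ)⁻¹ * k) := by
        rw [hcol, Fintype.card_fin]
    _ = Real.sqrt m := by
        rw [Complex.inv_ofReal_sqrt_mul_self (Nat.cast_nonneg k), Complex.ofReal_natCast,
          inv_mul_cancel₀ (by exact_mod_cast hk.ne'), star_one, mul_one]

theorem rowMarginal_one_one : rowMarginal T 1 1 = T ((Real.sqrt k : ℂ)⁻¹ • 1) := by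
  simp [rowMarginal]

theorem colMarginal_smul_mul_eq {X S : Matrix (Fin k) (Fin k) ℂ} {Y : Matrix (Fin m) (Fin m) ℂ}
    (hk : 0 < k) (h : IsInvSqrt (colMarginal Tstar X Y) S) :
    colMarginal Tstar ((Real.sqrt (Real.sqrt k) : ℂ)⁻¹ • (X * S)) Y = (Real.sqrt k : ℂ)⁻¹ • 1 := by
  have h' := h.smul (Real.sqrt_pos.mpr (Nat.cast_pos.mpr hk))
  rw [← h'.mul_mul_eq_inv_smul_one (Complex.ofReal_sqrt_natCast_ne_zero hk), ← Matrix.mul_smul]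
  simp only [colMarginal, conjTranspose_mul, h'.1.isHermitian.eq, Matrix.mul_assoc]

theorem rowMarginal_smul_mul_eq {X : Matrix (Fin k) (Fin k) ℂ} {Y S : Matrix (Fin m) (Fin m) ℂ}
    (hm : 0 < m) (h : IsInvSqrt (rowMarginal T X Y) S) :
    rowMarginal T X ((Real.sqrt (Real.sqrt m) : ℂ)⁻¹ • (S * Y)) = (Real.sqrt m : ℂ)⁻¹ • 1 := by
  have h' := h.smul (Real.sqrt_pos.mpr (Nat.cast_pos.mpr hm))
  rw [← h'.mul_mul_eq_inv_smul_one (Complex.ofReal_sqrt_natCast_ne_zero hm), ← Matrix.smul_mul]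
  simp only [rowMarginal, conjTranspose_mul, h'.1.isHermitian.eq, Matrix.mul_assoc]

end Scaling

theorem scaling_properties_general {k m : ℕ}
    (T : Matrix (Fin k) (Fin k) ℂ →ₗ[ℂ] Matrix (Fin m) (Fin m) ℂ)
    (Tstar : Matrix (Fin m) (Fin m) ℂ →ₗ[ℂ] Matrix (Fin k) (Fin k) ℂ)
    (hadj : ∀ X Y, ((T X) * Yᴴ).trace = (X * (Tstar Y)ᴴ).trace)
    (X : ℕ → Matrix (Fin k) (Fin k) ℂ) (Y : ℕ → Matrix (Fin m) (Fin m) ℂ)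
    (A : ℕ → Matrix (Fin k) (Fin k) ℂ) (B : ℕ → Matrix (Fin m) (Fin m) ℂ)
    (SA : ℕ → Matrix (Fin k) (Fin k) ℂ) (SB : ℕ → Matrix (Fin m) (Fin m) ℂ)
    (S0 : Matrix (Fin m) (Fin m) ℂ)
    (hX0 : X 0 = 1)
    (hS0 : IsInvSqrt (T ((Real.sqrt k : ℂ)⁻¹ • 1)) S0)
    (hY0 : Y 0 = (Real.sqrt (Real.sqrt m) : ℂ)⁻¹ • S0)
    (hA : ∀ n, A n = (X n)ᴴ * Tstar ((Real.sqrt m : ℂ)⁻¹ • ((Y n)ᴴ * Y n)) * X n)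
    (hSA : ∀ n, IsInvSqrt (A n) (SA n))
    (hXs : ∀ n, X (n + 1) = (Real.sqrt (Real.sqrt k) : ℂ)⁻¹ • (X n * SA n))
    (hB : ∀ n, B n = Y n * T ((Real.sqrt k : ℂ)⁻¹ • (X (n + 1) * (X (n + 1))ᴴ)) * (Y n)ᴴ)
    (hSB : ∀ n, IsInvSqrt (B n) (SB n))
    (hYs : ∀ n, Y (n + 1) = (Real.sqrt (Real.sqrt m) : ℂ)⁻¹ • (SB n * Y n))
    : (∀ n, 0 < n →
        Y n * T ((Real.sqrt k : ℂ)⁻¹ • (X n * (X n)ᴴ)) * (Y n)ᴴ =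
          (Real.sqrt m : ℂ)⁻¹ • 1 ∧
        (X (n + 1))ᴴ * Tstar ((Real.sqrt m : ℂ)⁻¹ • ((Y n)ᴴ * Y n)) * X (n + 1) =
          (Real.sqrt k : ℂ)⁻¹ • 1 ∧
        (A n).trace = (Real.sqrt k : ℂ) ∧ (B n).trace = (Real.sqrt m : ℂ)) ∧
      (∀ n, ((X n ⊗ₖ Y n).det).im = 0 ∧ 0 < ((X n ⊗ₖ Y n).det).re ∧
        ((X n ⊗ₖ Y n).det).re ≤ ((X (n + 1) ⊗ₖ Y (n + 1)).det).re) := by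
  rcases Nat.eq_zero_or_pos k with rfl | hk
  · rcases Nat.eq_zero_or_pos m with rfl | hm
    · exact ⟨fun n _ => ⟨Subsingleton.elim _ _, Subsingleton.elim _ _, by simp [trace],
        by simp [trace]⟩, fun n => by simp⟩
    · exact absurd (IsInvSqrt.pos_of_mul_map_mul T hm (Z₁ := 1) (Z₂ := 1)
        (by rwa [Matrix.one_mul, Matrix.mul_one])) (lt_irrefl 0)
  have hm : 0 < m := IsInvSqrt.pos_of_mul_map_mul Tstar hk (hA 0 ▸ hSA 0)
  have hSA' : ∀ n, IsInvSqrt (colMarginal Tstar (X n) (Y n)) (SA n) := fun n => by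
    rw [colMarginal, ← hA]; exact hSA n
  have hSB' : ∀ n, IsInvSqrt (rowMarginal T (X (n + 1)) (Y n)) (SB n) := fun n => by
    rw [rowMarginal, ← hB]; exact hSB n
  have hrow : ∀ n, rowMarginal T (X n) (Y n) = (Real.sqrt m : ℂ)⁻¹ • 1
    | 0 => by
      have h0 := rowMarginal_smul_mul_eq T hm (rowMarginal_one_one T ▸ hS0)
      rwa [Matrix.mul_one, ← hY0, ← hX0] at h0
    | n + 1 => hYs n ▸ rowMarginal_smul_mul_eq T hm (hSB' n)
  have hcol : ∀ n, colMarginal Tstar (X (n + 1)) (Y n) = (Real.sqrt k : ℂ)⁻¹ • 1 :=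
    fun n => hXs n ▸ colMarginal_smul_mul_eq Tstar hk (hSA' n)
  have htrA : ∀ n, (colMarginal Tstar (X n) (Y n)).trace = Real.sqrt k := fun n =>
    trace_colMarginal_of_rowMarginal_eq T Tstar hadj hk hm (hrow n)
  have htrB : ∀ n, (rowMarginal T (X (n + 1)) (Y n)).trace = Real.sqrt m := fun n =>
    trace_rowMarginal_of_colMarginal_eq T Tstar hadj hk hm (hcol n)
  have hdetX := pos_and_le_succ_of_eq_mul (d := fun n => (X n).det) (by simp [hX0])
    (fun n => by rw [hXs, ← Matrix.mul_smul, det_mul])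
    fun n => (hSA' n).one_le_det_inv_sqrt_sqrt_smul hk (htrA n)
  have hdetY := pos_and_le_succ_of_eq_mul (d := fun n => (Y n).det)
    (by rw [hY0]; exact (hS0.smul (Real.sqrt_pos.mpr (Nat.cast_pos.mpr hm))).1.det_pos)
    (fun n => by rw [hYs, ← Matrix.smul_mul, det_mul, mul_comm])
    fun n => (hSB' n).one_le_det_inv_sqrt_sqrt_smul hm (htrB n)
  refine ⟨fun n _ => ⟨hrow n, hcol n, hA n ▸ htrA n, hB n ▸ htrB n⟩, fun n => ?_⟩
  obtain ⟨hpos, hle⟩ := det_kronecker_pos_and_le (hdetX n).1 (hdetX n).2 (hdetY n).1 (hdetY n).2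
  exact ⟨(Complex.pos_iff.mp hpos).2.symm, (Complex.pos_iff.mp hpos).1, (Complex.le_def.mp hle).1⟩

/-- Basic properties of the scaling algorithm: normalization identities for `n > 0`,
traces of `A_n`, `B_n`, and positivity/monotonicity of `det(X_n ⊗ Y_n)`. -/
theorem scaling_properties {k m : ℕ}
    (T : Matrix (Fin k) (Fin k) ℂ →ₗ[ℂ] Matrix (Fin m) (Fin m) ℂ)
    (Tstar : Matrix (Fin m) (Fin m) ℂ →ₗ[ℂ] Matrix (Fin k) (Fin k) ℂ)
    (hadj : ∀ X Y, ((T X) * Yᴴ).trace = (X * (Tstar Y)ᴴ).trace)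
    (hTpos : ∀ A : Matrix (Fin k) (Fin k) ℂ, A.PosSemidef → (T A).PosSemidef)
    (hT1 : (T 1).PosDef) (hTs1 : (Tstar 1).PosDef)
    (X : ℕ → Matrix (Fin k) (Fin k) ℂ) (Y : ℕ → Matrix (Fin m) (Fin m) ℂ)
    (A : ℕ → Matrix (Fin k) (Fin k) ℂ) (B : ℕ → Matrix (Fin m) (Fin m) ℂ)
    (SA : ℕ → Matrix (Fin k) (Fin k) ℂ) (SB : ℕ → Matrix (Fin m) (Fin m) ℂ)
    (S0 : Matrix (Fin m) (Fin m) ℂ)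
    (hX0 : X 0 = 1)
    (hS0 : IsInvSqrt (T ((Real.sqrt k : ℂ)⁻¹ • 1)) S0)
    (hY0 : Y 0 = (Real.sqrt (Real.sqrt m) : ℂ)⁻¹ • S0)
    (hA : ∀ n, A n = (X n)ᴴ * Tstar ((Real.sqrt m : ℂ)⁻¹ • ((Y n)ᴴ * Y n)) * X n)
    (hSA : ∀ n, IsInvSqrt (A n) (SA n))
    (hXs : ∀ n, X (n + 1) = (Real.sqrt (Real.sqrt k) : ℂ)⁻¹ • (X n * SA n))
    (hB : ∀ n, B n = Y n * T ((Real.sqrt k : ℂ)⁻¹ • (X (n + 1) * (X (n + 1))ᴴ)) * (Y n)ᴴ)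
    (hSB : ∀ n, IsInvSqrt (B n) (SB n))
    (hYs : ∀ n, Y (n + 1) = (Real.sqrt (Real.sqrt m) : ℂ)⁻¹ • (SB n * Y n))
    : (∀ n, 0 < n →
        Y n * T ((Real.sqrt k : ℂ)⁻¹ • (X n * (X n)ᴴ)) * (Y n)ᴴ =
          (Real.sqrt m : ℂ)⁻¹ • 1 ∧
        (X (n + 1))ᴴ * Tstar ((Real.sqrt m : ℂ)⁻¹ • ((Y n)ᴴ * Y n)) * X (n + 1) =
          (Real.sqrt k : ℂ)⁻¹ • 1 ∧
        (A n).trace = (Real.sqrt k : ℂ) ∧ (B n).trace = (Real.sqrt m : ℂ)) ∧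
      (∀ n, ((X n ⊗ₖ Y n).det).im = 0 ∧ 0 < ((X n ⊗ₖ Y n).det).re ∧
        ((X n ⊗ₖ Y n).det).re ≤ ((X (n + 1) ⊗ₖ Y (n + 1)).det).re) :=
  scaling_properties_general T Tstar hadj X Y A B SA SB S0 hX0 hS0 hY0 hA hSA hXs hB hSB hYs
end
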